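/- arXiv:1402.5783 — 5 statements merged into one kernel-verified Lean document; each statement's English description precedes it below -/
import Mathlib

section
/- Every tree on an even number of vertices has a spanning forest (a subset of its edges) in which every vertex has odd degree. -/
open SimpleGraph Finset

private lemma path_len {V : Type*} {T : SimpleGraph V} (hT : T.IsTree) {u v : V}
    (p : T.Walk u v) (hp : p.IsPath) : p.length = T.dist u v := by
  obtain ⟨q, hq, hlen⟩ := hT.isConnected.exists_path_of_dist u v
  obtain ⟨x, hx, hxu⟩ := hT.existsUnique_path u v
  rw [hxu p hp, ← hxu q hq]
  exact hlen

/-- For an edge u-v in a tree, distances from u and v to any w differ by exactly 1. -/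
private lemma adj_dist {V : Type*} {T : SimpleGraph V} (hT : T.IsTree) {u v : V}
    (h : T.Adj u v) (w : V) :
    T.dist v w = T.dist u w + 1 ∨ T.dist u w = T.dist v w + 1 := by
  classical
  rcases eq_or_ne v w with rfl | hvw
  · right
    rw [SimpleGraph.dist_self, Nat.zero_add]
    exact SimpleGraph.dist_eq_one_iff_adj.mpr h
  · obtain ⟨Q, hQ, hQu⟩ := hT.existsUnique_path v w
    cases Q with
    | nil => exact absurd rfl hvw
    | @cons _ x _ h' Q' =>
      have hQ' := (SimpleGraph.Walk.cons_isPath_iff h' Q').mp hQ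
      have hd1 : T.dist v w = T.dist x w + 1 := by
        have h1 := path_len hT _ hQ'.1
        have h2 := path_len hT _ hQ
        simp only [SimpleGraph.Walk.length_cons] at h2
        omega
      by_cases hux : u = x
      · subst hux; left; exact hd1
      · right
        have hu_not : u ∉ (Walk.cons h' Q').support := by
          intro hu
          have h1 : ((Walk.cons h' Q').takeUntil u hu).IsPath := hQ.takeUntil hu
          have h2 : (Walk.cons h.symm Walk.nil : T.Walk v u).IsPath := by
            simp [SimpleGraph.Walk.cons_isPath_iff, h.ne']
          obtain ⟨p0, hp0, hp0u⟩ := hT.existsUnique_path v u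
          have heq : (Walk.cons h' Q').takeUntil u hu = Walk.cons h.symm Walk.nil := by
            rw [hp0u _ h1, ← hp0u _ h2]
          have hspec := (Walk.cons h' Q').take_spec hu
          rw [heq] at hspec
          have hg := congrArg (fun q : T.Walk v w => q.getVert 1) hspec
          simp only [SimpleGraph.Walk.cons_append, SimpleGraph.Walk.nil_append,
            SimpleGraph.Walk.getVert_cons_succ, SimpleGraph.Walk.getVert_zero] at hg
          exact hux hg
        have hP : (Walk.cons h (Walk.cons h' Q') : T.Walk u w).IsPath :=
          (SimpleGraph.Walk.cons_isPath_iff _ _).mpr ⟨hQ, hu_not⟩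
        have h1 := path_len hT _ hP
        have h2 := path_len hT _ hQ
        simp only [SimpleGraph.Walk.length_cons] at h1 h2
        omega

/-- For w ≠ v in a tree, there is a neighbor of v strictly closer to w, and it is unique. -/
private lemma pred_spec {V : Type*} {T : SimpleGraph V} (hT : T.IsTree) {v w : V}
    (hvw : v ≠ w) :
    ∃ x, T.Adj v x ∧ T.dist x w + 1 = T.dist v w ∧
      ∀ u, T.Adj v u → u ≠ x → T.dist u w = T.dist v w + 1 := by
  classical
  obtain ⟨Q, hQ, _⟩ := hT.existsUnique_path v w
  cases Q with
  | nil => exact absurd rfl hvw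
  | @cons _ x _ h' Q' =>
    have hQ' := (SimpleGraph.Walk.cons_isPath_iff h' Q').mp hQ
    have hd1 : T.dist v w = T.dist x w + 1 := by
      have h1 := path_len hT _ hQ'.1
      have h2 := path_len hT _ hQ
      simp only [SimpleGraph.Walk.length_cons] at h2
      omega
    refine ⟨x, h', hd1.symm, fun u hu hux => ?_⟩
    rcases adj_dist hT hu w with h1 | h1
    · exact h1
    · -- dist v w = dist u w + 1, i.e. u closer; show this forces u = x
      exfalso
      -- u is closer to w; reconstruct: unique path from v starts with u
      obtain ⟨P, hP, hPlen⟩ := hT.isConnected.exists_path_of_dist u w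
      have hv_not : v ∉ P.support := by
        intro hv
        have h3 : (P.dropUntil v hv).IsPath := hP.dropUntil hv
        have h4 := path_len hT _ h3
        have h5 := SimpleGraph.Walk.length_dropUntil_le P hv
        omega
      have hP2 : (Walk.cons hu P : T.Walk v w).IsPath :=
        (SimpleGraph.Walk.cons_isPath_iff _ _).mpr ⟨hP, hv_not⟩
      obtain ⟨p0, _, hp0u⟩ := hT.existsUnique_path v w
      have heq : (Walk.cons hu P : T.Walk v w) = Walk.cons h' Q' := by
        rw [hp0u _ hP2, ← hp0u _ hQ]
      have hg : (Walk.cons hu P : T.Walk v w).getVert 1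
          = (Walk.cons h' Q').getVert 1 := by rw [heq]
      simp only [SimpleGraph.Walk.getVert_cons_succ, SimpleGraph.Walk.getVert_zero] at hg
      exact hux hg

/-- Every tree on an even number of vertices has a spanning forest (a subgraph
on the same vertex set, using a subset of its edges) in which every vertex has
odd degree. -/
theorem stmt0 {V : Type*} [Fintype V] (T : SimpleGraph V) (hT : T.IsTree)
    (hV : Even (Fintype.card V)) :
    ∃ F : SimpleGraph V, F ≤ T ∧ ∀ v : V, Odd ((F.neighborSet v).ncard) := by
  classical
  -- side u v : vertices strictly closer to u than to v
  set side : V → V → Finset V :=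
    fun u v => univ.filter (fun w => T.dist u w < T.dist v w) with hside_def
  have hlt : ∀ {u v : V}, T.Adj u v → ∀ w, (T.dist u w < T.dist v w ↔ T.dist v w = T.dist u w + 1) := by
    intro u v h w
    rcases adj_dist hT h w with h1 | h1 <;> omega
  have hcompl : ∀ {u v : V}, T.Adj u v → (side u v).card + (side v u).card = Fintype.card V := by
    intro u v h
    have h0 := Finset.card_filter_add_card_filter_not
      (s := (univ : Finset V)) (p := fun w => T.dist u w < T.dist v w)
    rw [Finset.card_univ] at h0
    have hset : side v u = univ.filter (fun a => ¬T.dist u a < T.dist v a) := by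
      simp only [hside_def]
      apply Finset.filter_congr
      intro w _
      have := adj_dist hT h w
      constructor <;> intro <;> omega
    have hset2 : side u v = univ.filter (fun w => T.dist u w < T.dist v w) := by
      simp only [hside_def]
    rw [hset, hset2, h0]
  have hparity : ∀ {u v : V}, T.Adj u v → (Odd (side u v).card ↔ Odd (side v u).card) := by
    intro u v h
    have h1 := hcompl h
    obtain ⟨k, hk⟩ := hV
    rw [Nat.odd_iff, Nat.odd_iff]
    omega
  refine ⟨⟨fun u v => T.Adj u v ∧ Odd (side u v).card, ?_, ?_⟩, fun u v h => h.1, ?_⟩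
  · refine ⟨fun u v ⟨h1, h2⟩ => ?_⟩
    exact ⟨h1.symm, (hparity h1).mp h2⟩
  · refine ⟨fun v h => ?_⟩
    exact T.loopless.irrefl v h.1
  · intro v
    set F : SimpleGraph V :=
      ⟨fun u v => T.Adj u v ∧ Odd (side u v).card, _, _⟩ with hF_def
    have hNset : F.neighborSet v
        = ↑((T.neighborFinset v).filter (fun u => Odd (side u v).card)) := by
      ext u
      simp only [SimpleGraph.mem_neighborSet, Finset.coe_filter, Set.mem_setOf_eq,
        SimpleGraph.mem_neighborFinset, hF_def]
      constructor
      · rintro ⟨h1, h2⟩; exact ⟨h1, (hparity h1).mp h2⟩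
      · rintro ⟨h1, h2⟩; exact ⟨h1, (hparity h1).mpr h2⟩
    rw [hNset, Set.ncard_coe_finset]
    rw [← Finset.odd_sum_iff_odd_card_odd (s := T.neighborFinset v) (fun u => (side u v).card)]
    -- the sides of the neighbors of v partition V \ {v}
    have hpart : (univ : Finset V).erase v
        = (T.neighborFinset v).biUnion (fun u => side u v) := by
      ext w
      simp only [Finset.mem_erase, Finset.mem_biUnion, SimpleGraph.mem_neighborFinset,
        Finset.mem_univ, and_true, hside_def, Finset.mem_filter, true_and]
      constructor
      · intro hw
        obtain ⟨x, hx1, hx2, _⟩ := pred_spec hT (Ne.symm hw)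
        refine ⟨x, hx1, ?_⟩
        rw [hlt hx1.symm w]
        omega
      · rintro ⟨u, hu1, hu2⟩ rfl
        rw [SimpleGraph.dist_self] at hu2
        omega
    have hdisj : ∀ u₁ ∈ T.neighborFinset v, ∀ u₂ ∈ T.neighborFinset v, u₁ ≠ u₂ →
        Disjoint (side u₁ v) (side u₂ v) := by
      intro u₁ h₁ u₂ h₂ hne
      rw [SimpleGraph.mem_neighborFinset] at h₁ h₂
      rw [Finset.disjoint_left]
      intro w hw1 hw2
      simp only [hside_def, Finset.mem_filter, Finset.mem_univ, true_and] at hw1 hw2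
      have hwv : v ≠ w := by
        rintro rfl
        rw [SimpleGraph.dist_self] at hw1
        omega
      obtain ⟨x, _, _, hxu⟩ := pred_spec hT hwv
      have e1 : u₁ = x := by
        by_contra hc
        have := hxu u₁ h₁ hc
        omega
      have e2 : u₂ = x := by
        by_contra hc
        have := hxu u₂ h₂ hc
        omega
      exact hne (e1.trans e2.symm)
    have hsum : ∑ u ∈ T.neighborFinset v, (side u v).card = Fintype.card V - 1 := by
      rw [← Finset.card_biUnion hdisj, ← hpart, Finset.card_erase_of_mem (Finset.mem_univ v),
        Finset.card_univ]
    rw [hsum]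
    have hpos : 0 < Fintype.card V := by
      have : Nonempty V := hT.isConnected.nonempty
      exact Fintype.card_pos
    obtain ⟨k, hk⟩ := hV
    rw [Nat.odd_iff]
    omega
end

section
/- If a graph on vertex set V consists of a Hamiltonian cycle H together with an edge-disjoint spanning tree T, and |V| is even, then the graph contains a second Hamiltonian cycle, i.e., a Hamiltonian cycle distinct from H. -/
namespace SecondHam
open SimpleGraph List Finset

variable {V : Type*}



/-- consecutive edges of a list -/
def edgesOf : List V → List (Sym2 V)
  | a :: b :: t => s(a, b) :: edgesOf (b :: t)
  | _ => []

@[simp] lemma edgesOf_nil : edgesOf ([] : List V) = [] := rfl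
@[simp] lemma edgesOf_single (a : V) : edgesOf [a] = [] := rfl
@[simp] lemma edgesOf_cons₂ (a b : V) (t : List V) :
    edgesOf (a :: b :: t) = s(a, b) :: edgesOf (b :: t) := rfl

lemma length_edgesOf : ∀ (l : List V), (edgesOf l).length = l.length - 1
  | [] => rfl
  | [_] => rfl
  | a :: b :: t => by simp [length_edgesOf (b :: t)]

lemma getElem_edgesOf : ∀ (l : List V) (i : ℕ) (h : i < (edgesOf l).length),
    (edgesOf l)[i] = s(l[i]'(by rw [length_edgesOf] at h; omega),
      l[i+1]'(by rw [length_edgesOf] at h; omega))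
  | a :: b :: t, 0, h => rfl
  | a :: b :: t, (i+1), h => by
      simpa using getElem_edgesOf (b :: t) i (by simpa using h)

lemma mem_edgesOf_iff {l : List V} {e : Sym2 V} :
    e ∈ edgesOf l ↔ ∃ i : ℕ, ∃ h : i + 1 < l.length, e = s(l[i], l[i+1]) := by
  rw [List.mem_iff_getElem]
  constructor
  · rintro ⟨i, h, rfl⟩
    exact ⟨i, by rw [length_edgesOf] at h; omega, getElem_edgesOf l i h⟩
  · rintro ⟨i, h, rfl⟩
    exact ⟨i, by rw [length_edgesOf]; omega, getElem_edgesOf l i (by rw [length_edgesOf]; omega)⟩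

/-- build a walk from a chain -/
def mkw (G : SimpleGraph V) : (l : List V) → (a : V) → List.Chain G.Adj a l →
    G.Walk a (l.getLastD a)
  | [], a, _ => Walk.nil
  | b :: t, a, h =>
      (Walk.cons (List.chain_cons.mp h).1
        (mkw G t b (List.chain_cons.mp h).2)).copy rfl (List.getLastD_cons (a := a) (b := b) (l := t)).symm

@[simp] lemma mkw_support (G : SimpleGraph V) :
    ∀ (l : List V) (a : V) (h : List.Chain G.Adj a l), (mkw G l a h).support = a :: l
  | [], a, _ => rfl
  | b :: t, a, h => by
      simp [mkw, mkw_support G t b (List.chain_cons.mp h).2]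

@[simp] lemma mkw_edges (G : SimpleGraph V) :
    ∀ (l : List V) (a : V) (h : List.Chain G.Adj a l), (mkw G l a h).edges = edgesOf (a :: l)
  | [], a, _ => rfl
  | b :: t, a, h => by
      simp only [mkw, Walk.edges_copy, Walk.edges_cons, edgesOf_cons₂]
      rw [mkw_edges G t b (List.chain_cons.mp h).2]


section Cnt
variable [DecidableEq V]



/-- number of edges in list incident to x -/
def cntAt (x : V) (es : List (Sym2 V)) : ℕ := es.countP (fun e => decide (x ∈ e))

@[simp] lemma cntAt_nil (x : V) : cntAt x [] = 0 := rfl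

lemma cntAt_cons (x : V) (e : Sym2 V) (es : List (Sym2 V)) :
    cntAt x (e :: es) = cntAt x es + (if x ∈ e then 1 else 0) := by
  simp [cntAt, List.countP_cons]

lemma odd_iff_zmod (m : ℕ) : Odd m ↔ (m : ZMod 2) = 1 := by
  rw [Nat.odd_iff, ← ZMod.natCast_mod]
  rcases Nat.mod_two_eq_zero_or_one m with h | h <;> rw [h] <;> simp <;> decide

lemma even_iff_zmod (m : ℕ) : Even m ↔ (m : ZMod 2) = 0 := by
  rw [Nat.even_iff, ← ZMod.natCast_mod]
  rcases Nat.mod_two_eq_zero_or_one m with h | h <;> rw [h] <;> simp <;> decide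

lemma cast_eq_ite_odd (m : ℕ) : (m : ZMod 2) = if Odd m then 1 else 0 := by
  by_cases h : Odd m
  · rw [if_pos h, (odd_iff_zmod m).mp h]
  · rw [if_neg h, (even_iff_zmod m).mp (Nat.not_odd_iff_even.mp h)]

variable {G : SimpleGraph V}

lemma cntAt_eq_zero {a b x : V} (p : G.Walk a b) (hx : x ∉ p.support) :
    cntAt x p.edges = 0 := by
  rw [cntAt, List.countP_eq_zero]
  intro e he
  simp only [decide_eq_true_eq]
  intro hmem
  induction e with
  | h y z =>
    rcases Sym2.mem_iff.mp hmem with rfl | rfl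
    · exact hx (p.fst_mem_support_of_mem_edges he)
    · exact hx (p.snd_mem_support_of_mem_edges he)

/-- parity of the number of edges of a walk at a vertex -/
lemma cntAt_parity {a b : V} (p : G.Walk a b) (x : V) :
    (cntAt x p.edges : ZMod 2) = (if x = a then 1 else 0) + (if x = b then 1 else 0) := by
  induction p with
  | @nil u => by_cases h : x = u <;> simp [h] <;> decide
  | @cons a c b h q ih =>
    rw [Walk.edges_cons, cntAt_cons]
    push_cast
    have hac : a ≠ c := h.ne
    have e1 : (if x ∈ s(a,c) then (1:ZMod 2) else 0)
        = (if x = a then 1 else 0) + (if x = c then 1 else 0) := by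
      by_cases hxa : x = a <;> by_cases hxc : x = c
      · exact absurd (hxa.symm.trans hxc) hac
      · simp [Sym2.mem_iff, hxa, hxc, hac]
      · simp [Sym2.mem_iff, hxa, hxc, hac.symm]
      · simp [Sym2.mem_iff, hxa, hxc]
    have hcc : (if x = c then (1:ZMod 2) else 0) + (if x = c then 1 else 0) = 0 := by
      by_cases hxc : x = c <;> simp [hxc] <;> decide
    rw [ih, e1]
    linear_combination hcc
  
/-- exact count of edges at a vertex on a path -/
lemma cntAt_path {a b : V} (p : G.Walk a b) (hp : p.IsPath) (hab : a ≠ b) (x : V)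
    (hx : x ∈ p.support) :
    cntAt x p.edges = if x = a ∨ x = b then 1 else 2 := by
  induction p with
  | nil => exact absurd rfl hab
  | @cons a c b h q ih =>
    rw [SimpleGraph.Walk.cons_isPath_iff] at hp
    rw [Walk.edges_cons, cntAt_cons]
    by_cases hxa : x = a
    · subst hxa
      rw [cntAt_eq_zero q hp.2]
      simp [Sym2.mem_iff]
    · have hxq : x ∈ q.support := by
        rcases (SimpleGraph.Walk.mem_support_iff _).mp hx with h1 | h1
        · exact absurd h1 hxa
        · exact h1
      by_cases hcb : c = b
      · subst hcb
        have hq : q = SimpleGraph.Walk.nil := (SimpleGraph.Walk.isPath_iff_eq_nil (p := q)).mp hp.1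
        subst hq
        simp at hxq
        subst hxq
        simp [Sym2.mem_iff, hxa]
      · rw [ih hp.1 hcb hxq]
        have hxe : (if x ∈ s(a, c) then 1 else 0) = if x = c then 1 else 0 := by
          simp [Sym2.mem_iff, hxa]
        rw [hxe]
        by_cases hxc : x = c
        · by_cases hxb : x = b
          · exact absurd (hxc.symm.trans hxb) hcb
          · simp [hxc, hxb, hxa, h.ne', hcb]
        · by_cases hxb : x = b
          · simp [hxc, hxb, hxa, h.ne', hcb, Ne.symm hcb]
          · simp [hxc, hxb, hxa, h.ne', hcb]

/-- in a cycle every vertex of the support lies on exactly two edges -/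
lemma cntAt_cycle {a : V} (w : G.Walk a a) (hw : w.IsCycle) (x : V) (hx : x ∈ w.support) :
    cntAt x w.edges = 2 := by
  cases w with
  | nil => exact absurd rfl hw.ne_nil
  | @cons _ c _ h q =>
    rw [SimpleGraph.Walk.cons_isCycle_iff] at hw
    have hca : c ≠ a := h.ne'
    rw [Walk.edges_cons, cntAt_cons]
    by_cases hxa : x = a
    · subst hxa
      rw [cntAt_path q hw.1 hca x (SimpleGraph.Walk.end_mem_support q)]
      simp [Sym2.mem_iff]
    · have hxq : x ∈ q.support := by
        rcases (SimpleGraph.Walk.mem_support_iff _).mp hx with h1 | h1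
        · exact absurd h1 hxa
        · exact h1
      rw [cntAt_path q hw.1 hca x hxq]
      by_cases hxc : x = c
      · simp [Sym2.mem_iff, hxc, hxa]
      · simp [Sym2.mem_iff, hxc, hxa]


end Cnt



/-- the lollipop rotation of a list at index i -/
def rot (i : ℕ) (l : List V) : List V := l.take (i+1) ++ (l.drop (i+1)).reverse

lemma rot_perm (i : ℕ) (l : List V) : (rot i l).Perm l := by
  have h1 : (rot i l).Perm (l.take (i+1) ++ l.drop (i+1)) :=
    List.Perm.append_left _ (List.reverse_perm _)
  rw [List.take_append_drop] at h1
  exact h1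

@[simp] lemma rot_length (i : ℕ) (l : List V) : (rot i l).length = l.length :=
  (rot_perm i l).length_eq

lemma rot_getElem_le {i : ℕ} {l : List V} {j : ℕ} (hj : j ≤ i) (h2 : i + 1 ≤ l.length)
    (hjl : j < (rot i l).length) :
    (rot i l)[j] = l[j]'(by rw [rot_length] at hjl; exact hjl) := by
  have hlt : j < (l.take (i+1)).length := by
    rw [List.length_take]; omega
  simp only [rot]
  rw [List.getElem_append_left hlt, List.getElem_take]

lemma rot_getElem_gt {i : ℕ} {l : List V} {j : ℕ} (hj : i < j) (hjl : j < l.length) :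
    (rot i l)[j]'(by rw [rot_length]; exact hjl)
      = l[l.length + i - j]'(by omega) := by
  have hlen : (l.take (i+1)).length = i + 1 := by rw [List.length_take]; omega
  have hge : (l.take (i+1)).length ≤ j := by omega
  simp only [rot]
  rw [List.getElem_append_right hge]
  have h3 : j - (l.take (i+1)).length < (l.drop (i+1)).reverse.length := by
    simp [hlen]; omega
  rw [List.getElem_reverse]
  rw [List.getElem_drop]
  congr 1
  simp only [hlen, List.length_drop]
  omega

lemma rot_rot {i : ℕ} {l : List V} (h2 : i + 1 ≤ l.length) : rot i (rot i l) = l := by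
  have hlen : (l.take (i+1)).length = i + 1 := by rw [List.length_take]; omega
  have ht : (rot i l).take (i+1) = l.take (i+1) := by
    rw [rot, List.take_append, hlen]
    simp [List.take_take]
  have hd : (rot i l).drop (i+1) = (l.drop (i+1)).reverse := by
    rw [rot, List.drop_append, hlen]
    simp
  rw [show rot i (rot i l) = (rot i l).take (i+1) ++ ((rot i l).drop (i+1)).reverse from rfl,
    ht, hd, List.reverse_reverse, List.take_append_drop]

lemma rot_take_two {i : ℕ} {l : List V} (h1 : 1 ≤ i) : (rot i l).take 2 = l.take 2 := by
  rw [rot, List.take_append, List.take_take]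
  have : min 2 (i+1) = 2 := by omega
  rw [this]
  have h0 : 2 - (l.take (i+1)).length = 0 ∨ l.take (i+1) = l := by
    rcases le_or_gt (i+1) l.length with h | h
    · left; rw [List.length_take]; omega
    · right; exact List.take_of_length_le (by omega)
  rcases h0 with h0 | h0
  · rw [h0]; simp
  · rcases le_or_gt (i+1) l.length with h | h
    · rw [List.length_take]; have : 2 - min (i+1) l.length = 0 := by omega
      rw [this]; simp
    · have hd : l.drop (i+1) = [] := List.drop_eq_nil_of_le (by omega)
      rw [hd]; simp

lemma rot_chain' {R : V → V → Prop} (hsym : Symmetric R) {i : ℕ} {l : List V}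
    (hc : List.Chain' R l) (h2 : i + 2 < l.length)
    (hadj : R (l[l.length - 1]'(by omega)) (l[i]'(by omega))) :
    List.Chain' R (rot i l) := by
  replace hc : List.IsChain R l := hc
  rw [rot, show List.Chain' R = List.IsChain R from rfl, List.isChain_append]
  refine ⟨hc.prefix (List.take_prefix _ _), ?_, ?_⟩
  · rw [List.isChain_reverse]
    exact (hc.suffix (List.drop_suffix _ _)).imp (fun a b h => hsym h)
  · intro x hx y hy
    have hlen : (l.take (i+1)).length = i + 1 := by rw [List.length_take]; omega
    have hx' : x = l[i]'(by omega) := by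
      rw [List.getLast?_eq_getElem?] at hx
      rw [hlen] at hx
      simp only [List.getElem?_eq_getElem (by rw [hlen]; omega : i + 1 - 1 < (l.take (i+1)).length)] at hx
      simp only [Option.mem_def, Option.some.injEq] at hx
      rw [← hx]
      simp [List.getElem_take]
    have hy' : y = l[l.length - 1]'(by omega) := by
      rw [List.head?_reverse, List.getLast?_eq_getElem?] at hy
      have hld : (l.drop (i+1)).length = l.length - (i+1) := by simp
      rw [List.getElem?_eq_getElem (by rw [hld]; omega : (l.drop (i+1)).length - 1 < (l.drop (i+1)).length)] at hy
      simp only [Option.mem_def, Option.some.injEq] at hy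
      rw [← hy, List.getElem_drop]
      congr 1
      rw [hld]
      omega
    rw [hx', hy']
    exact hsym hadj


section Hfacts
variable [DecidableEq V] [Fintype V] {H : SimpleGraph V} [DecidableRel H.Adj]

lemma incidence_eq {a : V} {w : H.Walk a a}
    (hedge : H.edgeSet = {e | e ∈ w.edges}) (x : V) :
    H.incidenceFinset x = (w.edges.filter (fun e => decide (x ∈ e))).toFinset := by
  ext e
  rw [SimpleGraph.mem_incidenceFinset, List.mem_toFinset, List.mem_filter]
  unfold SimpleGraph.incidenceSet
  constructor
  · rintro ⟨he, hx⟩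
    rw [hedge] at he
    exact ⟨he, by simpa using hx⟩
  · rintro ⟨he, hx⟩
    exact ⟨hedge ▸ he, by simpa using hx⟩

lemma H_degree_two {a : V} {w : H.Walk a a} (hw : w.IsCycle)
    (hsupp : {x | x ∈ w.support} = Set.univ)
    (hedge : H.edgeSet = {e | e ∈ w.edges}) (x : V) :
    H.degree x = 2 := by
  have hx : x ∈ w.support := by
    have : x ∈ {x | x ∈ w.support} := by rw [hsupp]; trivial
    exact this
  rw [← SimpleGraph.card_incidenceFinset_eq_degree, incidence_eq hedge x]
  rw [List.toFinset_card_of_nodup (hw.edges_nodup.filter _)]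
  have : (w.edges.filter (fun e => decide (x ∈ e))).length = cntAt x w.edges := by
    rw [cntAt, List.countP_eq_length_filter]
  rw [this, cntAt_cycle w hw x hx]

lemma H_unique_other {a : V} {w : H.Walk a a} (hw : w.IsCycle)
    (hsupp : {x | x ∈ w.support} = Set.univ)
    (hedge : H.edgeSet = {e | e ∈ w.edges}) {x p b c : V}
    (hb : H.Adj x b) (hc : H.Adj x c) (hp : H.Adj x p)
    (hbp : b ≠ p) (hcp : c ≠ p) : b = c := by
  by_contra hbc
  have hsub : ({p, b, c} : Finset V) ⊆ H.neighborFinset x := by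
    intro y hy
    simp only [Finset.mem_insert, Finset.mem_singleton] at hy
    rcases hy with rfl | rfl | rfl <;> simp [SimpleGraph.mem_neighborFinset, hp, hb, hc]
  have hcard : ({p, b, c} : Finset V).card = 3 := by
    rw [Finset.card_insert_of_notMem (by simp [Ne.symm hbp, Ne.symm hcp]),
        Finset.card_insert_of_notMem (by simp [hbc])]
    rfl
  have := Finset.card_le_card hsub
  rw [hcard, SimpleGraph.card_neighborFinset_eq_degree,
      H_degree_two hw hsupp hedge x] at this
  omega

/-- A Hamiltonian traversal of a 2-regular-ish graph is determined by its first
two entries. -/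
lemma traverse_unique {H : SimpleGraph V}
    (huniq : ∀ {x p b c : V}, H.Adj x b → H.Adj x c → H.Adj x p → b ≠ p → c ≠ p → b = c)
    {l m : List V} (hl : l.Nodup) (hm : m.Nodup)
    (hlen : l.length = m.length)
    (hcl : ∀ i : ℕ, ∀ hi : i + 1 < l.length, s(l[i]'(by omega), l[i+1]'(by omega)) ∈ H.edgeSet)
    (hcm : ∀ i : ℕ, ∀ hi : i + 1 < m.length, s(m[i]'(by omega), m[i+1]'(by omega)) ∈ H.edgeSet)
    (h2 : 2 ≤ l.length)
    (h0 : l[0]'(by omega) = m[0]'(by omega))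
    (h1 : l[1]'(by omega) = m[1]'(by omega)) : l = m := by
  refine List.ext_getElem hlen (fun k hk1 hk2 => ?_)
  induction k using Nat.strong_induction_on with
  | _ k ih =>
    match k, hk1 with
    | 0, _ => exact h0
    | 1, _ => exact h1
    | (j+2), hk1 =>
      have e1 : l[j]'(by omega) = m[j]'(by omega) := ih j (by omega) (by omega) (by omega)
      have e2 : l[j+1]'(by omega) = m[j+1]'(by omega) := ih (j+1) (by omega) (by omega) (by omega)
      have al : H.Adj (l[j+1]'(by omega)) (l[j+2]'(by omega)) :=
        H.mem_edgeSet.mp (hcl (j+1) (by omega))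
      have am : H.Adj (l[j+1]'(by omega)) (m[j+2]'(by omega)) := by
        rw [e2]
        exact H.mem_edgeSet.mp (hcm (j+1) (by omega))
      have ap : H.Adj (l[j+1]'(by omega)) (l[j]'(by omega)) :=
        (H.mem_edgeSet.mp (hcl j (by omega))).symm
      have nbl : l[j+2]'(by omega) ≠ l[j]'(by omega) := by
        intro he
        have := (hl.getElem_inj_iff).mp he
        omega
      have nbm : m[j+2]'(by omega) ≠ l[j]'(by omega) := by
        rw [e1]
        intro he
        have := (hm.getElem_inj_iff).mp he
        omega
      exact huniq al am ap nbl nbm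

end Hfacts
section Aux
variable {G' : SimpleGraph V} {u v : V} {n : ℕ}

/-- Hamiltonian paths with prescribed first two vertices. -/
def PBpred (G' : SimpleGraph V) (u v : V) (n : ℕ) (l : List V) : Prop :=
  l.length = n ∧ l.Nodup ∧ (∀ x, x ∈ l) ∧ l.Chain' G'.Adj ∧ l.take 2 = [u, v]

def PB (G' : SimpleGraph V) (u v : V) (n : ℕ) := {l : List V // PBpred G' u v n l}

lemma pb_finite [Finite V] (G' : SimpleGraph V) (u v : V) (n : ℕ) : Finite (PB G' u v n) := by
  apply Finite.of_injective (fun p : PB G' u v n => (fun i : Fin n => p.val.getD i u))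
  intro p q h
  apply Subtype.ext
  have hp := p.prop.1
  have hq := q.prop.1
  refine List.ext_getElem (by rw [hp, hq]) (fun k hk1 hk2 => ?_)
  have hx := congrFun h ⟨k, by omega⟩
  simp only at hx
  rw [List.getD_eq_getElem _ _ hk1, List.getD_eq_getElem _ _ hk2] at hx
  exact hx

lemma getD_rot_le {l : List V} {i j : ℕ} (hj : j ≤ i) (h2 : i + 1 ≤ l.length) (d : V) :
    (rot i l).getD j d = l.getD j d := by
  have hjl : j < l.length := by omega
  rw [List.getD_eq_getElem _ _ (by rw [rot_length]; exact hjl),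
      List.getD_eq_getElem _ _ hjl, rot_getElem_le hj h2]

lemma getD_rot_gt {l : List V} {i j : ℕ} (hj : i < j) (hjl : j < l.length) (d : V) :
    (rot i l).getD j d = l.getD (l.length + i - j) d := by
  rw [List.getD_eq_getElem _ _ (by rw [rot_length]; exact hjl),
      List.getD_eq_getElem _ _ (by omega : l.length + i - j < l.length),
      rot_getElem_gt hj hjl]

lemma chain'_adj_getD {l : List V} (hch : l.Chain' G'.Adj) {i : ℕ} (hi : i + 1 < l.length)
    (d : V) : G'.Adj (l.getD i d) (l.getD (i+1) d) := by
  rw [List.getD_eq_getElem _ _ (by omega : i < l.length), List.getD_eq_getElem _ _ hi]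
  have := List.isChain_iff_getElem.mp hch i (by omega)
  simpa using this

def auxR (G' : SimpleGraph V) (u v : V) (n : ℕ) (p q : PB G' u v n) : Prop :=
  ∃ i : ℕ, 1 ≤ i ∧ i + 2 < n ∧ G'.Adj (p.val.getD (n-1) u) (p.val.getD i u) ∧
    q.val = rot i p.val

lemma auxR_symm : Symmetric (auxR G' u v n) := by
  rintro p q ⟨i, hi1, hi2, hadj, heq⟩
  have hlen : p.val.length = n := p.prop.1
  refine ⟨i, hi1, hi2, ?_, ?_⟩
  · rw [heq, getD_rot_gt (by omega) (by omega) u, getD_rot_le (le_refl i) (by omega) u]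
    have : p.val.length + i - (n-1) = i + 1 := by omega
    rw [this]
    exact (chain'_adj_getD p.prop.2.2.2.1 (by omega) u).symm
  · rw [heq, rot_rot (by omega)]

lemma auxR_loopless : Irreflexive (auxR G' u v n) := by
  rintro p ⟨i, hi1, hi2, hadj, heq⟩
  have hlen : p.val.length = n := p.prop.1
  have h1 : p.val.getD (i+1) u = (rot i p.val).getD (i+1) u := by rw [← heq]
  rw [getD_rot_gt (by omega) (by omega) u] at h1
  have : p.val.length + i - (i+1) = n - 1 := by omega
  rw [this] at h1
  rw [List.getD_eq_getElem _ _ (by omega : i + 1 < p.val.length),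
      List.getD_eq_getElem _ _ (by omega : n - 1 < p.val.length)] at h1
  have := (p.prop.2.1.getElem_inj_iff).mp h1
  omega

def auxG (G' : SimpleGraph V) (u v : V) (n : ℕ) : SimpleGraph (PB G' u v n) where
  Adj := auxR G' u v n
  symm := ⟨fun _ _ h => auxR_symm h⟩
  loopless := ⟨auxR_loopless⟩

lemma rot_mem_PB {p : PB G' u v n} {i : ℕ} (hi1 : 1 ≤ i) (hi2 : i + 2 < n)
    (hadj : G'.Adj (p.val.getD (n-1) u) (p.val.getD i u)) :
    PBpred G' u v n (rot i p.val) := by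
  obtain ⟨hlen, hnd, hmem, hch, ht2⟩ := p.prop
  refine ⟨by rw [rot_length, hlen], ((rot_perm i p.val).nodup_iff).mpr hnd,
    fun x => ((rot_perm i p.val).mem_iff).mpr (hmem x), ?_, by rw [rot_take_two hi1, ht2]⟩
  refine rot_chain' (fun _ _ h => h.symm) hch (by omega) ?_
  have h1 : p.val.getD (n-1) u = p.val[p.val.length - 1]'(by omega) := by
    rw [List.getD_eq_getElem _ _ (by omega : n - 1 < p.val.length)]
    congr 1
    omega
  have h2 : p.val.getD i u = p.val[i]'(by omega) := by
    rw [List.getD_eq_getElem _ _ (by omega : i < p.val.length)]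
  rw [← h1, ← h2]
  exact hadj

lemma rot_ne_rot {l : List V} (d : V) (hnd : l.Nodup) {i₁ i₂ : ℕ} (h12 : i₁ < i₂)
    (h2 : i₂ + 2 < l.length) : rot i₁ l ≠ rot i₂ l := by
  intro he
  have e1 : (rot i₁ l).getD (i₁+1) d = l.getD (l.length + i₁ - (i₁+1)) d :=
    getD_rot_gt (by omega) (by omega) d
  have e2 : (rot i₂ l).getD (i₁+1) d = l.getD (i₁+1) d :=
    getD_rot_le (by omega) (by omega) d
  rw [he, e2] at e1
  rw [List.getD_eq_getElem _ _ (by omega : i₁ + 1 < l.length),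
      List.getD_eq_getElem _ _ (by omega : l.length + i₁ - (i₁+1) < l.length)] at e1
  have := (hnd.getElem_inj_iff).mp e1
  omega


variable [Fintype (PB G' u v n)] [DecidableRel (auxG G' u v n).Adj] [DecidableEq V]

lemma aux_degree (p : PB G' u v n) [DecidableRel G'.Adj] :
    (auxG G' u v n).degree p =
      ((Finset.Ico 1 (n-2)).filter
        (fun i => G'.Adj (p.val.getD (n-1) u) (p.val.getD i u))).card := by
  rw [← SimpleGraph.card_neighborFinset_eq_degree]
  refine (Finset.card_bij
    (fun i hi => (⟨rot i p.val, by
      rw [Finset.mem_filter, Finset.mem_Ico] at hi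
      exact rot_mem_PB hi.1.1 (by omega) hi.2⟩ : PB G' u v n)) ?_ ?_ ?_).symm
  · intro i hi
    rw [Finset.mem_filter, Finset.mem_Ico] at hi
    exact (SimpleGraph.mem_neighborFinset (auxG G' u v n) p _).mpr ⟨i, hi.1.1, by omega, hi.2, rfl⟩
  · intro i₁ hi₁ i₂ hi₂ he
    rw [Finset.mem_filter, Finset.mem_Ico] at hi₁ hi₂
    have hv := congrArg Subtype.val he
    simp only at hv
    by_contra hne
    rcases Nat.lt_or_ge i₁ i₂ with h | h
    · exact rot_ne_rot u p.prop.2.1 h (by rw [p.prop.1]; omega) hv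
    · have : i₂ < i₁ := by omega
      exact rot_ne_rot u p.prop.2.1 this (by rw [p.prop.1]; omega) hv.symm
  · intro q hq
    replace hq := (SimpleGraph.mem_neighborFinset (auxG G' u v n) p q).mp hq
    obtain ⟨i, hi1, hi2, hadj, heq⟩ := hq
    refine ⟨i, ?_, Subtype.ext heq.symm⟩
    rw [Finset.mem_filter, Finset.mem_Ico]
    exact ⟨⟨hi1, by omega⟩, hadj⟩

lemma take_two_facts {l : List V} {d : V} (h : l.take 2 = [u, v]) :
    l.getD 0 d = u ∧ l.getD 1 d = v ∧ 2 ≤ l.length := by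
  match l with
  | [] => simp at h
  | [a] => simp at h
  | a :: b :: t =>
    simp only [List.take, List.cons.injEq] at h
    obtain ⟨rfl, rfl, -⟩ := h
    refine ⟨rfl, rfl, by simp⟩

lemma aux_degree_odd [Fintype V] [DecidableRel G'.Adj] (hn : 4 ≤ n)
    (p : PB G' u v n)
    (hodd : Odd (G'.degree (p.val.getD (n-1) u))) :
    (Odd ((auxG G' u v n).degree p) ↔ G'.Adj (p.val.getD (n-1) u) u) := by
  obtain ⟨hlen, hnd, hmem, hch, ht2⟩ := p.prop
  set l := p.val with hl
  set z := l.getD (n-1) u with hz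
  have hA : G'.degree z =
      ((Finset.range n).filter (fun i => G'.Adj z (l.getD i u))).card := by
    rw [← SimpleGraph.card_neighborFinset_eq_degree]
    refine (Finset.card_bij (fun i hi => l.getD i u) ?_ ?_ ?_).symm
    · intro i hi
      rw [Finset.mem_filter] at hi
      rw [SimpleGraph.mem_neighborFinset]
      exact hi.2
    · intro i₁ hi₁ i₂ hi₂ he
      rw [Finset.mem_filter, Finset.mem_range] at hi₁ hi₂
      rw [List.getD_eq_getElem _ _ (by omega : i₁ < l.length),
          List.getD_eq_getElem _ _ (by omega : i₂ < l.length)] at he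
      exact (hnd.getElem_inj_iff).mp he
    · intro y hy
      rw [SimpleGraph.mem_neighborFinset] at hy
      obtain ⟨i, hlt, hge⟩ := List.mem_iff_getElem.mp (hmem y)
      refine ⟨i, ?_, by rw [List.getD_eq_getElem _ _ hlt]; exact hge⟩
      rw [Finset.mem_filter, Finset.mem_range]
      refine ⟨by omega, ?_⟩
      rw [List.getD_eq_getElem _ _ hlt, hge]
      exact hy
  -- cast everything to ZMod 2
  set f : ℕ → ZMod 2 := fun i => if G'.Adj z (l.getD i u) then 1 else 0 with hf
  have hcastJ : ((G'.degree z : ℕ) : ZMod 2) = ∑ i ∈ Finset.range n, f i := by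
    rw [hA, Finset.card_filter]
    push_cast
    rfl
  have hsplit : ∑ i ∈ Finset.range n, f i
      = f 0 + (∑ i ∈ Finset.Ico 1 (n-2), f i) + f (n-2) + f (n-1) := by
    rw [Finset.range_eq_Ico]
    rw [← Finset.sum_Ico_consecutive f (by omega : (0:ℕ) ≤ n-1) (by omega : n-1 ≤ n)]
    rw [← Finset.sum_Ico_consecutive f (by omega : (0:ℕ) ≤ n-2) (by omega : n-2 ≤ n-1)]
    rw [← Finset.sum_Ico_consecutive f (by omega : (0:ℕ) ≤ 1) (by omega : 1 ≤ n-2)]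
    have e1 : Finset.Ico 0 1 = {0} := by rfl
    have e2 : Finset.Ico (n-2) (n-1) = {n-2} := by
      ext x
      simp only [Finset.mem_Ico, Finset.mem_singleton]
      omega
    have e3 : Finset.Ico (n-1) n = {n-1} := by
      ext x
      simp only [Finset.mem_Ico, Finset.mem_singleton]
      omega
    rw [e1, e2, e3, Finset.sum_singleton, Finset.sum_singleton, Finset.sum_singleton]
  have hf2 : f (n-2) = 1 := by
    show (if G'.Adj z (l.getD (n-2) u) then (1 : ZMod 2) else 0) = 1
    have hadj : G'.Adj (l.getD (n-2) u) (l.getD (n-2+1) u) :=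
      chain'_adj_getD hch (by omega) u
    have h21 : n - 2 + 1 = n - 1 := by omega
    rw [h21] at hadj
    rw [← hz] at hadj
    rw [if_pos hadj.symm]
  have hf3 : f (n-1) = 0 := by
    show (if G'.Adj z (l.getD (n-1) u) then (1 : ZMod 2) else 0) = 0
    rw [← hz]
    rw [if_neg (G'.irrefl)]
  have hf0 : f 0 = if G'.Adj z u then 1 else 0 := by
    show (if G'.Adj z (l.getD 0 u) then (1 : ZMod 2) else 0) = _
    rw [(take_two_facts ht2).1]
  have hcastI : ((((Finset.Ico 1 (n-2)).filter
      (fun i => G'.Adj z (l.getD i u))).card : ℕ) : ZMod 2)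
      = ∑ i ∈ Finset.Ico 1 (n-2), f i := by
    rw [Finset.card_filter]
    push_cast
    rfl
  have hdegcast : ((G'.degree z : ℕ) : ZMod 2) = 1 := (odd_iff_zmod _).mp hodd
  have key : (((auxG G' u v n).degree p : ℕ) : ZMod 2) = if G'.Adj z u then 1 else 0 := by
    rw [aux_degree p, hcastI]
    have := hcastJ
    rw [hdegcast, hsplit, hf2, hf3, hf0] at this
    have hchi : (if G'.Adj z u then (1 : ZMod 2) else 0) * 2 = 0 := by
      rw [show (2 : ZMod 2) = 0 from rfl]
      ring
    linear_combination -this - hchi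
  rw [odd_iff_zmod, key]
  split_ifs with h
  · simp [h]
  · simp [h]

end Aux
section Tprime
variable [Fintype V] [DecidableEq V]

lemma degree_eq_card_filter (G : SimpleGraph V) [DecidableRel G.Adj] (x : V) :
    G.degree x = (Finset.univ.filter (fun e : Sym2 V => e ∈ G.edgeSet ∧ x ∈ e)).card := by
  rw [← SimpleGraph.card_incidenceFinset_eq_degree]
  congr 1
  ext e
  simp only [SimpleGraph.mem_incidenceFinset, Finset.mem_filter, Finset.mem_univ, true_and]
  unfold SimpleGraph.incidenceSet
  rfl

lemma cnt_finset (l : List (Sym2 V)) (hnd : l.Nodup) (x : V) :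
    (Finset.univ.filter (fun e : Sym2 V => x ∈ e ∧ e ∈ l)).card = cntAt x l := by
  rw [cntAt, List.countP_eq_length_filter,
      ← List.toFinset_card_of_nodup (hnd.filter _)]
  congr 1
  ext e
  simp only [Finset.mem_filter, Finset.mem_univ, true_and, List.mem_toFinset,
    List.mem_filter, decide_eq_true_eq]
  tauto

lemma odd_incidence (r : V) {T : SimpleGraph V} (pv : ∀ y : V, T.Walk r y)
    (hpv : ∀ y, (pv y).IsPath) (heven : Even (Fintype.card V)) (x : V) :
    Odd ((Finset.univ.filter (fun e : Sym2 V =>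
      Odd ((Finset.univ.filter (fun y => e ∈ (pv y).edges)).card) ∧ x ∈ e)).card) := by
  rw [odd_iff_zmod]
  rw [Finset.card_filter]
  push_cast
  have step1 : ∀ e : Sym2 V,
      ((if Odd ((Finset.univ.filter (fun y => e ∈ (pv y).edges)).card) ∧ x ∈ e
        then (1 : ZMod 2) else 0))
      = if x ∈ e then (((Finset.univ.filter (fun y => e ∈ (pv y).edges)).card : ℕ) : ZMod 2)
        else 0 := by
    intro e
    by_cases hx : x ∈ e
    · by_cases ho : Odd ((Finset.univ.filter (fun y => e ∈ (pv y).edges)).card)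
      · rw [if_pos ⟨ho, hx⟩, if_pos hx, (odd_iff_zmod _).mp ho]
      · rw [if_neg (fun hc => ho hc.1), if_pos hx,
            (even_iff_zmod _).mp (Nat.not_odd_iff_even.mp ho)]
    · rw [if_neg (fun hc => hx hc.2), if_neg hx]
  rw [Finset.sum_congr rfl (fun e _ => step1 e)]
  have step2 : ∀ e : Sym2 V,
      (if x ∈ e then (((Finset.univ.filter (fun y => e ∈ (pv y).edges)).card : ℕ) : ZMod 2)
        else 0)
      = ∑ y : V, if x ∈ e ∧ e ∈ (pv y).edges then (1 : ZMod 2) else 0 := by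
    intro e
    by_cases hx : x ∈ e
    · rw [if_pos hx, Finset.card_filter]
      push_cast
      refine Finset.sum_congr rfl (fun y _ => ?_)
      by_cases hy : e ∈ (pv y).edges
      · rw [if_pos hy, if_pos ⟨hx, hy⟩]
      · rw [if_neg hy, if_neg (fun hc => hy hc.2)]
    · rw [if_neg hx]
      symm
      refine Finset.sum_eq_zero (fun y _ => ?_)
      rw [if_neg (fun hc => hx hc.1)]
  rw [Finset.sum_congr rfl (fun e _ => step2 e)]
  rw [Finset.sum_comm]
  have step3 : ∀ y : V,
      (∑ e : Sym2 V, if x ∈ e ∧ e ∈ (pv y).edges then (1 : ZMod 2) else 0)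
      = (if x = r then 1 else 0) + (if x = y then 1 else 0) := by
    intro y
    rw [← cntAt_parity (pv y) x, ← cnt_finset (pv y).edges ((hpv y).isTrail.edges_nodup) x,
        Finset.card_filter]
    push_cast
    rfl
  rw [Finset.sum_congr rfl (fun y _ => step3 y)]
  rw [Finset.sum_add_distrib, Finset.sum_const]
  rw [Finset.sum_ite_eq Finset.univ x (fun _ => (1 : ZMod 2))]
  simp only [Finset.mem_univ, if_true, Finset.card_univ, nsmul_eq_mul]
  rw [(even_iff_zmod _).mp heven]
  ring

lemma degree_sup_disjoint (A B : SimpleGraph V) [DecidableRel A.Adj] [DecidableRel B.Adj]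
    [DecidableRel (A ⊔ B).Adj] (hd : Disjoint A.edgeSet B.edgeSet) (x : V) :
    (A ⊔ B).degree x = A.degree x + B.degree x := by
  rw [degree_eq_card_filter, degree_eq_card_filter, degree_eq_card_filter]
  have hsplit : (Finset.univ.filter (fun e : Sym2 V => e ∈ (A ⊔ B).edgeSet ∧ x ∈ e))
      = (Finset.univ.filter (fun e : Sym2 V => e ∈ A.edgeSet ∧ x ∈ e))
        ∪ (Finset.univ.filter (fun e : Sym2 V => e ∈ B.edgeSet ∧ x ∈ e)) := by
    ext e
    simp only [Finset.mem_filter, Finset.mem_univ, true_and, Finset.mem_union,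
      SimpleGraph.edgeSet_sup, Set.mem_union]
    tauto
  rw [hsplit, Finset.card_union_of_disjoint]
  rw [Finset.disjoint_left]
  intro e he1 he2
  rw [Finset.mem_filter] at he1 he2
  exact Set.disjoint_left.mp hd he1.2.1 he2.2.1

end Tprime
lemma take_two_eq {l : List V} (h : 2 ≤ l.length) (d : V) :
    l.take 2 = [l.getD 0 d, l.getD 1 d] := by
  match l with
  | [] => simp at h
  | [a] => simp at h
  | a :: b :: t => rfl

lemma getLastD_cons_getD (a d : V) (t : List V) (ht : t ≠ []) :
    t.getLastD d = (a :: t).getD ((a::t).length - 1) d := by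
  have h1 : t.length - 1 < t.length := by
    cases t with
    | nil => exact absurd rfl ht
    | cons x s => simp
  rw [List.getLastD_eq_getLast?, List.getLast?_eq_getElem?,
      List.getElem?_eq_getElem h1]
  have h2 : (a :: t).length - 1 < (a :: t).length := by simp
  rw [List.getD_eq_getElem _ _ h2]
  simp only [Option.getD_some]
  have h3 : (a :: t).length - 1 = (t.length - 1) + 1 := by
    simp only [List.length_cons]
    omega
  rw [show ((a :: t)[(a::t).length - 1]'h2) = ((a :: t)[(t.length - 1) + 1]'(by omega)) from by
    congr 1]
  rw [List.getElem_cons_succ]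

end SecondHam

/-- `H` is a cycle graph whose vertex (support) set is exactly `S`:
there is a cycle walk in `H` visiting exactly the vertices of `S`, and the
edges of `H` are exactly the edges of this cycle. -/
def IsCycleGraphOn {α : Type*} (H : SimpleGraph α) (S : Set α) : Prop :=
  ∃ (a : α) (w : H.Walk a a), w.IsCycle ∧ {x | x ∈ w.support} = S ∧
    H.edgeSet = {e | e ∈ w.edges}

open SecondHam SimpleGraph in
/-- If a graph on a vertex set `V` of even cardinality consists of a Hamiltonian
cycle `H` together with an edge-disjoint spanning tree `T`, then the graph
`H ⊔ T` contains a second Hamiltonian cycle, i.e. a Hamiltonian cycle whose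
edge set differs from that of `H`. -/
theorem stmt1 {V : Type*} [Fintype V] (hV : Even (Fintype.card V))
    (H T : SimpleGraph V) (hH : IsCycleGraphOn H Set.univ) (hT : T.IsTree)
    (hdisj : Disjoint H.edgeSet T.edgeSet) :
    ∃ (a : V) (w : (H ⊔ T).Walk a a), w.IsCycle ∧
      {x | x ∈ w.support} = Set.univ ∧ {e | e ∈ w.edges} ≠ H.edgeSet := by
  classical
  obtain ⟨a, w, hcyc, hsupp, hedge⟩ := hH
  set n := Fintype.card V with hn
  -- the Hamiltonian path underlying the cycle
  set l₀ : List V := w.reverse.support.tail.reverse with hl₀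
  have hsupr : w.reverse.support = a :: w.reverse.support.tail := Walk.support_eq_cons _
  have hsup : w.support = l₀ ++ [a] := by
    have h1 : w.support = w.reverse.support.reverse := by
      rw [Walk.support_reverse, List.reverse_reverse]
    rw [h1, hl₀]
    conv_lhs => rw [hsupr]
    rw [List.reverse_cons]
  have hlenw : l₀.length + 1 = w.length + 1 := by
    have := w.length_support
    rw [hsup, List.length_append] at this
    simpa using this
  have hmemsup : ∀ x : V, x ∈ w.support := Set.eq_univ_iff_forall.mp hsupp
  have hlpos : 3 ≤ l₀.length := by
    have := hcyc.three_le_length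
    omega
  have hsl0 : w.support.length = l₀.length + 1 := by
    rw [hsup, List.length_append]
    simp
  have hl₀0 : l₀[0]'(by omega) = a := by
    have e1 := List.getElem_of_eq hsup (i := 0) (by omega)
    have e2 := List.getElem_of_eq (Walk.support_eq_cons w) (i := 0) (by omega)
    rw [List.getElem_append_left (by omega)] at e1
    rw [List.getElem_cons_zero] at e2
    rw [← e1, e2]
  have hl₀ne : l₀ ≠ [] := by
    intro h
    rw [h] at hlpos
    simp at hlpos
  have hs : l₀ = a :: l₀.tail := by
    conv_lhs => rw [← List.cons_head_tail hl₀ne]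
    congr 1
    rw [List.head_eq_getElem]
    exact hl₀0
  have hnodup : l₀.Nodup := by
    have htn : w.support.tail.Nodup := hcyc.support_nodup
    rw [hsup] at htn
    rw [hs] at htn
    rw [List.cons_append, List.tail_cons] at htn
    rcases List.nodup_append.mp htn with ⟨hsn, -, hdisj0⟩
    rw [hs]
    exact List.nodup_cons.mpr ⟨fun ha => hdisj0 a ha a (by simp) rfl, hsn⟩
  have hmem0 : ∀ x : V, x ∈ l₀ := by
    intro x
    have hx := hmemsup x
    rw [hsup, List.mem_append] at hx
    rcases hx with hx | hx
    · exact hx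
    · simp only [List.mem_singleton] at hx
      subst hx
      exact List.mem_iff_getElem.mpr ⟨0, by omega, hl₀0⟩
  have hlen0 : l₀.length = n := by
    have h1 : l₀.toFinset = Finset.univ := by
      ext x
      simp [hmem0 x]
    have h2 := List.toFinset_card_of_nodup hnodup
    rw [h1, Finset.card_univ] at h2
    omega
  have hn4 : 4 ≤ n := by
    obtain ⟨k, hk⟩ := hV
    omega
  have hchainsup : List.Chain' H.Adj w.support := w.isChain_adj_support
  have chain₀ : List.Chain' H.Adj l₀ := hchainsup.prefix ⟨[a], hsup.symm⟩
  -- the tree paths and the parity subgraph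
  set pv : ∀ y : V, T.Path a y := fun y => ((hT.isConnected.preconnected a y).some).toPath
    with hpv
  set T' : SimpleGraph V := SimpleGraph.fromEdgeSet
    {e : Sym2 V | Odd ((Finset.univ.filter (fun y => e ∈ (pv y).val.edges)).card)} with hT'
  have hT'T : T' ≤ T := by
    rw [← SimpleGraph.edgeSet_subset_edgeSet]
    intro e he
    rw [hT', SimpleGraph.edgeSet_fromEdgeSet] at he
    obtain ⟨hodd, -⟩ := he
    have hpos : 0 < (Finset.univ.filter (fun y => e ∈ (pv y).val.edges)).card := by
      rcases hodd with ⟨k, hk⟩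
      omega
    obtain ⟨y, hy⟩ := Finset.card_pos.mp hpos
    rw [Finset.mem_filter] at hy
    exact (pv y).val.edges_subset_edgeSet hy.2
  have hT'odd : ∀ x : V, Odd (T'.degree x) := by
    intro x
    rw [degree_eq_card_filter]
    have hset : (Finset.univ.filter (fun e : Sym2 V => e ∈ T'.edgeSet ∧ x ∈ e))
        = (Finset.univ.filter (fun e : Sym2 V =>
            Odd ((Finset.univ.filter (fun y => e ∈ (pv y).val.edges)).card) ∧ x ∈ e)) := by
      ext e
      simp only [Finset.mem_filter, Finset.mem_univ, true_and]
      rw [hT', SimpleGraph.edgeSet_fromEdgeSet]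
      constructor
      · rintro ⟨⟨ho, -⟩, hx⟩
        exact ⟨ho, hx⟩
      · rintro ⟨ho, hx⟩
        refine ⟨⟨ho, ?_⟩, hx⟩
        have hpos : 0 < (Finset.univ.filter (fun y => e ∈ (pv y).val.edges)).card := by
          rcases ho with ⟨k, hk⟩
          omega
        obtain ⟨y, hy⟩ := Finset.card_pos.mp hpos
        rw [Finset.mem_filter] at hy
        have := (pv y).val.edges_subset_edgeSet hy.2
        intro hdiag
        exact (T.not_isDiag_of_mem_edgeSet this) hdiag
    rw [hset]
    exact odd_incidence a (fun y => (pv y).val) (fun y => (pv y).prop) hV x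
  -- the odd graph
  set G' : SimpleGraph V := H ⊔ T' with hG'
  have hHG' : H ≤ G' := le_sup_left
  have hG'HT : G' ≤ H ⊔ T := sup_le_sup_left hT'T H
  have hdisj' : Disjoint H.edgeSet T'.edgeSet :=
    hdisj.mono_right (SimpleGraph.edgeSet_subset_edgeSet.mpr hT'T)
  have hG'deg : ∀ x : V, Odd (G'.degree x) := by
    intro x
    have h1 : G'.degree x = H.degree x + T'.degree x := degree_sup_disjoint H T' hdisj' x
    rw [H_degree_two hcyc hsupp hedge x] at h1
    obtain ⟨k, hk⟩ := hT'odd x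
    exact ⟨k + 1, by omega⟩
  -- set up the path space
  set v : V := l₀.getD 1 a with hv
  have ht2₀ : l₀.take 2 = [a, v] := by
    rw [take_two_eq (by omega) a, hv]
    congr 1
    rw [List.getD_eq_getElem _ _ (by omega : 0 < l₀.length), hl₀0]
  letI : Fintype (PB G' a v n) := @Fintype.ofFinite _ (pb_finite G' a v n)
  have chain₀' : List.Chain' G'.Adj l₀ := chain₀.imp (fun _ _ h => hHG' h)
  set p₀ : PB G' a v n := ⟨l₀, hlen0, hnodup, hmem0, chain₀', ht2₀⟩ with hp₀
  have hlast₀ : H.Adj (l₀.getD (n-1) a) a := by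
    have hc := List.isChain_iff_getElem.mp hchainsup (n - 1) (by omega)
    have e1 : w.support[n-1]'(by omega) = l₀[n-1]'(by omega) := by
      rw [List.getElem_of_eq hsup (i := n-1) (by omega)]
      rw [List.getElem_append_left (by omega)]
    have e2 : w.support[n-1+1]'(by omega) = a := by
      rw [List.getElem_of_eq hsup (i := n-1+1) (by omega)]
      rw [List.getElem_append_right (by omega)]
      simp
    rw [e1, e2] at hc
    rw [List.getD_eq_getElem _ _ (by omega : n - 1 < l₀.length)]
    exact hc
  set Scl : Finset (PB G' a v n) :=
    Finset.univ.filter (fun p : PB G' a v n => G'.Adj (p.val.getD (n-1) a) a) with hScl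
  have hp₀mem : p₀ ∈ Scl := by
    rw [hScl, Finset.mem_filter]
    exact ⟨Finset.mem_univ _, hHG' hlast₀⟩
  have hScl_even : Even Scl.card := by
    have heq : Scl = Finset.univ.filter
        (fun p : PB G' a v n => Odd ((auxG G' a v n).degree p)) := by
      refine Finset.filter_congr (fun p _ => ?_)
      rw [aux_degree_odd hn4 p (hG'deg _)]
    rw [heq]
    exact SimpleGraph.even_card_odd_degree_vertices _
  have hcard2 : 1 < Scl.card := by
    have hpos : 0 < Scl.card := Finset.card_pos.mpr ⟨p₀, hp₀mem⟩
    obtain ⟨k, hk⟩ := hScl_even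
    omega
  obtain ⟨p', hp'mem, hp'ne⟩ := Finset.exists_mem_ne hcard2 p₀
  -- build the second Hamiltonian cycle from p'
  obtain ⟨hlen', hnd', hmem', hch', ht2'⟩ := p'.prop
  set l' : List V := p'.val with hl'
  have hrest : l' = a :: v :: l'.drop 2 := by
    conv_lhs => rw [← List.take_append_drop 2 l', ht2']
    rfl
  have hz'u : G'.Adj (l'.getD (n-1) a) a := by
    rw [hScl, Finset.mem_filter] at hp'mem
    exact hp'mem.2
  set z' : V := l'.getD (n-1) a with hz'
  have hch'' : List.Chain (H ⊔ T).Adj a (v :: l'.drop 2) := by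
    have h1 : List.Chain' (H ⊔ T).Adj l' := hch'.imp (fun _ _ h => hG'HT h)
    rw [hrest] at h1
    exact h1
  have hdrop_ne : v :: l'.drop 2 ≠ [] := by simp
  have hlast_eq : (v :: l'.drop 2).getLastD a = z' := by
    rw [getLastD_cons_getD a a (v :: l'.drop 2) hdrop_ne, hz']
    congr 1
    · rw [← hrest]
    · rw [← hrest, hlen']
  set W : (H ⊔ T).Walk a ((v :: l'.drop 2).getLastD a) :=
    mkw (H ⊔ T) (v :: l'.drop 2) a hch'' with hW
  set Wc : (H ⊔ T).Walk a z' := W.copy rfl hlast_eq with hWc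
  have hWs : Wc.support = l' := by
    rw [hWc, Walk.support_copy, hW, mkw_support, ← hrest]
  have hWe : Wc.edges = edgesOf l' := by
    rw [hWc, Walk.edges_copy, hW, mkw_edges, ← hrest]
  have hWpath : Wc.IsPath := (Walk.isPath_def _).mpr (by rw [hWs]; exact hnd')
  have hadj_uz : (H ⊔ T).Adj a z' := hG'HT hz'u.symm
  have hl'0 : l'[0]'(by omega) = a := by
    rw [List.getElem_of_eq hrest (i := 0) (by omega)]
    rfl
  have hl'last : l'[n-1]'(by omega) = z' := by
    rw [hz', List.getD_eq_getElem _ _ (by omega : n - 1 < l'.length)]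
  set C : (H ⊔ T).Walk a a := Walk.cons hadj_uz Wc.reverse with hC
  have hCcyc : C.IsCycle := by
    rw [hC, Walk.cons_isCycle_iff]
    refine ⟨hWpath.reverse, ?_⟩
    rw [Walk.edges_reverse, List.mem_reverse, hWe]
    intro hmem
    obtain ⟨i, hi, heq⟩ := mem_edgesOf_iff.mp hmem
    rw [Sym2.eq_iff] at heq
    rcases heq with ⟨h1, h2⟩ | ⟨h1, h2⟩
    · have hi0 : i = 0 := by
        have := hnd'.getElem_inj_iff.mp (hl'0.trans h1)
        omega
      have hin : i + 1 = n - 1 := by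
        have := hnd'.getElem_inj_iff.mp (hl'last.trans h2)
        omega
      omega
    · have : (0 : ℕ) = i + 1 := hnd'.getElem_inj_iff.mp (hl'0.trans h1)
      omega
  have hCsup : {x | x ∈ C.support} = Set.univ := by
    apply Set.eq_univ_iff_forall.mpr
    intro x
    show x ∈ C.support
    rw [hC, Walk.support_cons, List.mem_cons]
    right
    rw [Walk.support_reverse, List.mem_reverse, hWs]
    exact hmem' x
  refine ⟨a, C, hCcyc, hCsup, ?_⟩
  intro heq
  -- derive that l' traverses H, contradicting uniqueness
  have hCe : C.edges = s(a, z') :: Wc.reverse.edges := by rw [hC]; rfl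
  have hpairs' : ∀ i : ℕ, ∀ hi : i + 1 < l'.length,
      s(l'[i]'(by omega), l'[i+1]'(by omega)) ∈ H.edgeSet := by
    intro i hi
    rw [← heq]
    show _ ∈ C.edges
    rw [hCe, List.mem_cons]
    right
    rw [Walk.edges_reverse, List.mem_reverse, hWe]
    exact mem_edgesOf_iff.mpr ⟨i, hi, rfl⟩
  have hpairs₀ : ∀ i : ℕ, ∀ hi : i + 1 < l₀.length,
      s(l₀[i]'(by omega), l₀[i+1]'(by omega)) ∈ H.edgeSet := by
    intro i hi
    have hc := List.isChain_iff_getElem.mp chain₀ i (by omega)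
    exact H.mem_edgeSet.mpr hc
  have huniq : ∀ {x p b c : V}, H.Adj x b → H.Adj x c → H.Adj x p → b ≠ p → c ≠ p → b = c :=
    fun hb hc hp hbp hcp => H_unique_other hcyc hsupp hedge hb hc hp hbp hcp
  have hll : l' = l₀ := by
    refine traverse_unique huniq hnd' hnodup (by omega) hpairs' hpairs₀ (by omega) ?_ ?_
    · exact hl'0.trans hl₀0.symm
    · have e1 : l'[1]'(by omega) = v := by
        rw [List.getElem_of_eq hrest (i := 1) (by omega)]
        rfl
      have e2 : v = l₀[1]'(by omega) :=
        hv.trans (List.getD_eq_getElem _ _ (by omega : 1 < l₀.length))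
      exact e1.trans e2
  exact hp'ne (Subtype.ext hll)
end

section
/- Every Hamiltonian graph in which every vertex has odd degree contains a second Hamiltonian cycle, i.e., for any Hamiltonian cycle H of such a graph there exists a Hamiltonian cycle distinct from H. -/
namespace Thomason
variable {V : Type*}

def edgesOf : List V → List (Sym2 V)
  | [] => []
  | [_] => []
  | x :: y :: t => s(x, y) :: edgesOf (y :: t)

@[simp] lemma edgesOf_nil : edgesOf ([] : List V) = [] := rfl
@[simp] lemma edgesOf_singleton (x : V) : edgesOf [x] = [] := rfl
@[simp] lemma edgesOf_cons_cons (x y : V) (t : List V) :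
    edgesOf (x :: y :: t) = s(x, y) :: edgesOf (y :: t) := rfl

lemma mem_edgesOf : ∀ {q : List V} {e : Sym2 V},
    e ∈ edgesOf q ↔ ∃ i, ∃ h : i + 1 < q.length, e = s(q[i]'(by omega), q[i+1])
  | [], e => by simp
  | [x], e => by simp
  | x :: y :: t, e => by
    simp only [edgesOf_cons_cons, List.mem_cons]
    constructor
    · rintro (rfl | h)
      · exact ⟨0, by simp, rfl⟩
      · obtain ⟨j, hj, rfl⟩ := mem_edgesOf.mp h
        exact ⟨j + 1, by simpa using Nat.succ_lt_succ hj, by simp⟩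
    · rintro ⟨i, h, rfl⟩
      match i with
      | 0 => exact Or.inl rfl
      | j + 1 =>
        right
        exact mem_edgesOf.mpr ⟨j, by simpa using Nat.lt_of_succ_lt_succ h, by simp⟩

lemma walk_edges_eq {G : SimpleGraph V} {u v : V} (p : G.Walk u v) :
    p.edges = edgesOf p.support := by
  induction p with
  | nil => rfl
  | @cons u x v h p ih =>
    rw [SimpleGraph.Walk.edges_cons, SimpleGraph.Walk.support_cons, ih]
    conv_rhs => rw [p.support_eq_cons, edgesOf_cons_cons]
    conv_lhs => rw [p.support_eq_cons]

def mkWalk (G : SimpleGraph V) : (u v : V) → (l : List V) → List.Chain G.Adj u (l ++ [v]) → G.Walk u v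
  | u, v, [], h => SimpleGraph.Walk.cons (List.chain_cons.mp h).1 SimpleGraph.Walk.nil
  | u, v, x :: t, h =>
    SimpleGraph.Walk.cons (List.chain_cons.mp h).1 (mkWalk G x v t (List.chain_cons.mp h).2)

@[simp] lemma mkWalk_support (G : SimpleGraph V) : ∀ (u v : V) (l : List V)
    (h : List.Chain G.Adj u (l ++ [v])), (mkWalk G u v l h).support = u :: (l ++ [v])
  | u, v, [], h => rfl
  | u, v, x :: t, h => by
    simp [mkWalk]
    exact mkWalk_support G x v t _



variable {G : SimpleGraph V}



def rot (l : List V) (i : ℕ) : List V := l.take (i+1) ++ (l.drop (i+1)).reverse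

lemma rot_perm (l : List V) (i : ℕ) : (rot l i).Perm l := by
  conv_rhs => rw [← List.take_append_drop (i+1) l]
  exact List.Perm.append_left _ (List.reverse_perm _)

@[simp] lemma rot_length (l : List V) (i : ℕ) : (rot l i).length = l.length :=
  (rot_perm l i).length_eq

lemma rot_getElem_le (l : List V) (i : ℕ) {j : ℕ} (hj : j ≤ i) (hjl : j < l.length) :
    (rot l i)[j]'(by simpa using hjl) = l[j] := by
  unfold rot
  rw [List.getElem_append_left (by simp; omega), List.getElem_take]

lemma rot_take (l : List V) (i : ℕ) (h : i + 1 ≤ l.length) :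
    (rot l i).take (i+1) = l.take (i+1) := by
  unfold rot
  rw [List.take_append_of_le_length (by simp; omega), List.take_take]
  simp

lemma rot_drop (l : List V) (i : ℕ) (h : i + 1 ≤ l.length) :
    (rot l i).drop (i+1) = (l.drop (i+1)).reverse := by
  unfold rot
  rw [List.drop_left' (by simp; omega)]

lemma rot_rot (l : List V) (i : ℕ) (h : i + 1 ≤ l.length) :
    rot (rot l i) i = l := by
  show (rot l i).take (i+1) ++ ((rot l i).drop (i+1)).reverse = l
  rw [rot_take l i h, rot_drop l i h, List.reverse_reverse, List.take_append_drop]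

lemma rot_getElem_last (l : List V) (i : ℕ) (h : i + 2 < l.length) :
    (rot l i)[l.length - 1]'(by simp; omega) = l[i+1]'(by omega) := by
  have h1 : (l.take (i+1)).length = i + 1 := by simp; omega
  unfold rot
  rw [List.getElem_append_right (by simp; omega)]
  simp only [List.getElem_reverse, List.getElem_drop]
  congr 1
  simp
  omega





lemma rot_chain' {l : List V} {i : ℕ} (hc : l.Chain' G.Adj) (h2 : i + 2 < l.length)
    (hadj : G.Adj (l[i]'(by omega)) (l[l.length - 1]'(by omega))) :
    (rot l i).Chain' G.Adj := by
  have e1 : (l.take (i+1)).getLast? = some (l[i]'(by omega)) := by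
    rw [List.getLast?_eq_getElem?]
    simp only [List.length_take]
    rw [show min (i+1) l.length - 1 = i by omega]
    rw [List.getElem?_take, if_pos (by omega), List.getElem?_eq_getElem (by omega)]
  have e2 : (l.drop (i+1)).getLast? = some (l[l.length-1]'(by omega)) := by
    rw [List.getLast?_eq_getElem?, List.length_drop, List.getElem?_drop]
    rw [show i + 1 + (l.length - (i+1) - 1) = l.length - 1 by omega]
    rw [List.getElem?_eq_getElem (by omega)]
  unfold rot
  refine List.isChain_append.mpr ?_
  refine ⟨List.IsChain.take hc _, List.isChain_reverse.mpr ((List.IsChain.drop hc _).imp fun a b hab => hab.symm), ?_⟩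
  intro x hx y hy
  rw [List.head?_reverse, e2] at hy
  rw [e1] at hx
  obtain rfl : l[i]'(by omega) = x := by simpa using hx
  obtain rfl : l[l.length-1]'(by omega) = y := by simpa using hy
  exact hadj

lemma rot_take_two {l : List V} {i : ℕ} (h1 : 1 ≤ i) (h : i + 1 ≤ l.length) :
    (rot l i).take 2 = l.take 2 := by
  have e : (rot l i).take 2 = ((rot l i).take (i+1)).take 2 := by
    rw [List.take_take]; congr 1; omega
  rw [e, rot_take l i h, List.take_take]
  congr 1; omega

lemma rot_ne {l : List V} {i : ℕ} (hnd : l.Nodup) (h2 : i + 2 < l.length) :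
    rot l i ≠ l := by
  intro he
  have h1 : (rot l i)[l.length - 1]'(by simp; omega) = l[i+1]'(by omega) :=
    rot_getElem_last l i h2
  have h3 : (rot l i)[l.length - 1]'(by simp; omega) = l[l.length - 1]'(by omega) :=
    List.getElem_of_eq he _
  have h4 : l[i+1]'(by omega) = l[l.length - 1]'(by omega) := h1 ▸ h3
  have := (List.Nodup.getElem_inj_iff hnd).mp h4
  omega



lemma mem_edgesOf_getD {q : List V} {e : Sym2 V} (d : V) :
    e ∈ edgesOf q ↔ ∃ i, i + 1 < q.length ∧ e = s(q.getD i d, q.getD (i+1) d) := by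
  rw [mem_edgesOf]
  constructor
  · rintro ⟨i, h, rfl⟩
    exact ⟨i, h, by rw [List.getD_eq_getElem _ _ (by omega), List.getD_eq_getElem _ _ h]⟩
  · rintro ⟨i, h, rfl⟩
    exact ⟨i, h, by rw [List.getD_eq_getElem _ _ (by omega), List.getD_eq_getElem _ _ h]⟩

lemma cyc_getD {l : List V} {a : V} (h0 : 0 < l.length) (ha : l.getD 0 a = a)
    {k : ℕ} (hk : k ≤ l.length) :
    (l ++ [a]).getD k a = l.getD (if k = l.length then 0 else k) a := by
  rcases eq_or_lt_of_le hk with rfl | hk'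
  · simp only [if_pos rfl]
    rw [List.getD_append_right _ _ _ _ (le_refl _), Nat.sub_self]
    simpa using ha.symm
  · rw [if_neg (by omega), List.getD_append _ _ _ _ hk']

lemma cyc_inj {l : List V} {a : V} (hnd : l.Nodup) (h0 : 0 < l.length)
    (ha : l.getD 0 a = a) {i j : ℕ} (hi : i ≤ l.length) (hj : j ≤ l.length)
    (h : (l ++ [a]).getD i a = (l ++ [a]).getD j a) :
    i = j ∨ (i = 0 ∧ j = l.length) ∨ (j = 0 ∧ i = l.length) := by
  rw [cyc_getD h0 ha hi, cyc_getD h0 ha hj] at h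
  set i' := if i = l.length then 0 else i with hi'
  set j' := if j = l.length then 0 else j with hj'
  have hi'' : i' < l.length := by rw [hi']; split <;> omega
  have hj'' : j' < l.length := by rw [hj']; split <;> omega
  rw [List.getD_eq_getElem _ _ hi'', List.getD_eq_getElem _ _ hj''] at h
  have h2 := (List.Nodup.getElem_inj_iff hnd).mp h
  rw [hi', hj'] at h2
  split at h2 <;> split at h2 <;> omega

lemma edges_determine {l l' : List V} {a b : V} (hnd : l.Nodup) (hnd' : l'.Nodup)
    (hlen : l'.length = l.length) (hlen3 : 3 ≤ l.length)
    (ht : l.take 2 = [a, b]) (ht' : l'.take 2 = [a, b])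
    (hE : ∀ e, e ∈ edgesOf (l ++ [a]) → e ∈ edgesOf (l' ++ [a])) :
    l = l' := by
  have h0 : 0 < l.length := by omega
  have h0' : 0 < l'.length := by omega
  have hl2 : l = a :: b :: l.drop 2 := by
    conv_lhs => rw [← List.take_append_drop 2 l, ht]
    rfl
  have hl2' : l' = a :: b :: l'.drop 2 := by
    conv_lhs => rw [← List.take_append_drop 2 l', ht']
    rfl
  have hg0 : l.getD 0 a = a := by rw [hl2]; rfl
  have hg0' : l'.getD 0 a = a := by rw [hl2']; rfl
  have hg1 : l.getD 1 a = b := by rw [hl2]; rfl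
  have hg1' : l'.getD 1 a = b := by rw [hl2']; rfl
  have main : ∀ k, k ≤ l.length → (l ++ [a]).getD k a = (l' ++ [a]).getD k a := by
    intro k
    induction k using Nat.strong_induction_on with
    | _ k IH =>
      intro hk
      obtain rfl | rfl | hk2 : k = 0 ∨ k = 1 ∨ 2 ≤ k := by omega
      · rw [List.getD_append _ _ _ _ h0, List.getD_append _ _ _ _ h0', hg0, hg0']
      · rw [List.getD_append _ _ _ _ (by omega), List.getD_append _ _ _ _ (by omega),
          hg1, hg1']
      · obtain ⟨m, rfl⟩ : ∃ m, k = m + 2 := ⟨k - 2, by omega⟩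
        have hmem : s((l ++ [a]).getD (m+1) a, (l ++ [a]).getD (m+2) a)
            ∈ edgesOf (l ++ [a]) :=
          (mem_edgesOf_getD a).mpr ⟨m+1, by simp; omega, rfl⟩
        obtain ⟨j, hj, heq⟩ := (mem_edgesOf_getD a).mp (hE _ hmem)
        simp only [List.length_append, List.length_singleton] at hj
        have hjn : j < l.length := by omega
        have i1 : (l ++ [a]).getD (m+1) a = (l' ++ [a]).getD (m+1) a :=
          IH (m+1) (by omega) (by omega)
        have i0 : (l ++ [a]).getD m a = (l' ++ [a]).getD m a :=
          IH m (by omega) (by omega)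
        rcases Sym2.eq_iff.mp heq with ⟨hA1, hA2⟩ | ⟨hA1, hA2⟩
        · -- cd(m+1) = cd'(j), cd(m+2) = cd'(j+1)
          have : (l' ++ [a]).getD j a = (l' ++ [a]).getD (m+1) a := by
            rw [← hA1, i1]
          rcases cyc_inj hnd' h0' hg0' (by omega) (by omega) this with hc | hc | hc
          · rw [hA2, hc]
          · omega
          · omega
        · -- cd(m+1) = cd'(j+1), cd(m+2) = cd'(j)
          have : (l' ++ [a]).getD (j+1) a = (l' ++ [a]).getD (m+1) a := by
            rw [← hA1, i1]
          rcases cyc_inj hnd' h0' hg0' (by omega) (by omega) this with hc | hc | hc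
          · -- j = m
            obtain rfl : j = m := by omega
            have h2 : (l ++ [a]).getD (j+2) a = (l ++ [a]).getD j a := by
              rw [hA2, ← i0]
            rcases cyc_inj hnd h0 hg0 (by omega) (by omega) h2 with hc' | hc' | hc' <;>
              omega
          · omega
          · omega
  apply List.ext_getElem hlen.symm
  intro i hi1 hi2
  have hmi := main i (le_of_lt hi1)
  rw [List.getD_append _ _ _ _ hi1, List.getD_append _ _ _ _ hi2,
    List.getD_eq_getElem _ _ hi1, List.getD_eq_getElem _ _ hi2] at hmi
  exact hmi


section Counting
variable [DecidableEq V]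

def pivotOK (G : SimpleGraph V) (a : V) (l : List V) (i : ℕ) : Prop :=
  0 < i ∧ i + 2 < l.length ∧ G.Adj (l.getD i a) (l.getD (l.length - 1) a)

instance pivotOK.dec (G : SimpleGraph V) [DecidableRel G.Adj] (a : V) (l : List V) :
    DecidablePred (pivotOK G a l) := fun i => by unfold pivotOK; infer_instance

omit [DecidableEq V] in
lemma getD_inj {l : List V} {d : V} (hnd : l.Nodup) {i j : ℕ} (hi : i < l.length)
    (hj : j < l.length) (h : l.getD i d = l.getD j d) : i = j := by
  rw [List.getD_eq_getElem _ _ hi, List.getD_eq_getElem _ _ hj] at h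
  exact (List.Nodup.getElem_inj_iff hnd).mp h

omit [DecidableEq V] in
lemma chain'_getD {G : SimpleGraph V} {l : List V} {d : V} (hc : l.Chain' G.Adj) {i : ℕ}
    (h : i + 1 < l.length) : G.Adj (l.getD i d) (l.getD (i+1) d) := by
  rw [List.getD_eq_getElem _ _ (by omega), List.getD_eq_getElem _ _ h]
  have := List.isChain_iff_getElem.mp hc i (by omega)
  simpa [List.get_eq_getElem] using this

variable [Fintype V]

lemma pivot_count {G : SimpleGraph V} [DecidableRel G.Adj] {l : List V} {a b z : V}
    (hnd : l.Nodup) (hcov : ∀ v, v ∈ l) (hchain : l.Chain' G.Adj)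
    (ht : l.take 2 = [a, b]) (hz : z = l.getD (l.length - 1) a) (hlen3 : 3 ≤ l.length) :
    ((Finset.range l.length).filter (fun i => pivotOK G a l i)).card + 1
      + (if G.Adj a z then 1 else 0) = G.degree z := by
  classical
  have hl2 : l = a :: b :: l.drop 2 := by
    conv_lhs => rw [← List.take_append_drop 2 l, ht]
    rfl
  have hg0 : l.getD 0 a = a := by rw [hl2]; rfl
  set n := l.length with hn
  set p := l.getD (n - 2) a with hp
  have hpz : G.Adj p z := by
    rw [hz, hp, show n - 1 = (n - 2) + 1 by omega]
    exact chain'_getD hchain (by omega)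
  have hzv : z = l.getD (n-1) a := hz
  have hpa : p ≠ a := by
    intro h
    have := getD_inj hnd (by omega : n - 2 < l.length) (by omega : 0 < l.length)
      (by rw [← hp, hg0, h])
    omega
  have hcard : ((Finset.range n).filter (fun i => pivotOK G a l i)).card
      = (G.neighborFinset z \ {p, a}).card := by
    apply Finset.card_bij (fun i _ => l.getD i a)
    · intro i hi
      simp only [Finset.mem_filter, Finset.mem_range] at hi
      obtain ⟨hin, h0i, h2i, hadj⟩ := hi
      simp only [Finset.mem_sdiff, SimpleGraph.mem_neighborFinset, Finset.mem_insert,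
        Finset.mem_singleton]
      refine ⟨(hzv ▸ hadj).symm, ?_⟩
      push_neg
      constructor
      · intro h
        have := getD_inj hnd (by omega : i < l.length) (by omega : n - 2 < l.length) (h.trans hp)
        omega
      · intro h
        have := getD_inj hnd (by omega : i < l.length) (by omega : 0 < l.length)
          (h.trans hg0.symm)
        omega
    · intro i hi j hj h
      simp only [Finset.mem_filter, Finset.mem_range] at hi hj
      exact getD_inj hnd (by omega) (by omega) h
    · intro v hv
      simp only [Finset.mem_sdiff, SimpleGraph.mem_neighborFinset, Finset.mem_insert,
        Finset.mem_singleton] at hv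
      push_neg at hv
      obtain ⟨hadj, hvp, hva⟩ := hv
      have hvmem : v ∈ l := hcov v
      have hilt : l.idxOf v < l.length := List.idxOf_lt_length_iff.mpr hvmem
      refine ⟨l.idxOf v, ?_, ?_⟩
      · have hgd : l.getD (l.idxOf v) a = v := by
          rw [List.getD_eq_getElem _ _ hilt, List.getElem_idxOf hilt]
        simp only [Finset.mem_filter, Finset.mem_range]
        refine ⟨hilt, ?_, ?_, ?_⟩
        · rcases Nat.eq_zero_or_pos (l.idxOf v) with h | h
          · exfalso; apply hva; rw [← hgd, h, hg0]
          · exact h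
        · have h1 : l.idxOf v ≠ n - 1 := by
            intro h
            apply G.ne_of_adj hadj
            rw [← hgd, h, ← hzv]
          have h2 : l.idxOf v ≠ n - 2 := by
            intro h
            apply hvp
            rw [← hgd, h, ← hp]
          omega
        · rw [hgd, ← hn, ← hzv]
          exact hadj.symm
      · rw [List.getD_eq_getElem _ _ hilt, List.getElem_idxOf hilt]
  rw [hcard]
  have hsplit := Finset.card_sdiff_add_card_inter (G.neighborFinset z) {p, a}
  have hpN : p ∈ G.neighborFinset z := by
    simp only [SimpleGraph.mem_neighborFinset]
    exact hpz.symm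
  have hinter : (G.neighborFinset z ∩ {p, a}).card = 1 + (if G.Adj a z then 1 else 0) := by
    by_cases hA : G.Adj a z
    · rw [if_pos hA]
      have : G.neighborFinset z ∩ {p, a} = {p, a} := by
        apply Finset.inter_eq_right.mpr
        intro x hx
        simp only [Finset.mem_insert, Finset.mem_singleton] at hx
        rcases hx with rfl | rfl
        · exact hpN
        · simp only [SimpleGraph.mem_neighborFinset]; exact hA.symm
      rw [this, Finset.card_insert_of_notMem (by simpa using hpa), Finset.card_singleton]
    · rw [if_neg hA]
      have : G.neighborFinset z ∩ {p, a} = {p} := by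
        ext x
        simp only [Finset.mem_inter, Finset.mem_insert, Finset.mem_singleton,
          SimpleGraph.mem_neighborFinset]
        constructor
        · rintro ⟨hxz, rfl | rfl⟩
          · rfl
          · exact absurd hxz.symm hA
        · rintro rfl
          exact ⟨hpz.symm, Or.inl rfl⟩
      rw [this, Finset.card_singleton]
  rw [SimpleGraph.degree, ← hsplit, hinter]
  omega

end Counting


section Main
variable [Fintype V]

def isHP (G : SimpleGraph V) (a b : V) (l : List V) : Prop :=
  l.Chain' G.Adj ∧ (∀ v : V, v ∈ l) ∧ l.take 2 = [a, b]

instance isHP.dec [DecidableEq V] (G : SimpleGraph V) [DecidableRel G.Adj] (a b : V) :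
    DecidablePred (isHP G a b) := fun l => by unfold isHP List.Chain'; infer_instance

lemma length_eq_card [DecidableEq V] {l : List V} (hnd : l.Nodup) (hcov : ∀ v : V, v ∈ l) :
    l.length = Fintype.card V := by
  have huniv : l.toFinset = Finset.univ := Finset.eq_univ_iff_forall.mpr
    (fun v => List.mem_toFinset.mpr (hcov v))
  rw [← List.toFinset_card_of_nodup hnd, huniv, Finset.card_univ]

lemma rot_good {G : SimpleGraph V} {a b : V} {l : List V} {i : ℕ}
    (hnd : l.Nodup) (hp : isHP G a b l) (hok : pivotOK G a l i) :
    (rot l i).Nodup ∧ isHP G a b (rot l i) ∧ pivotOK G a (rot l i) i := by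
  obtain ⟨hc, hcov, ht⟩ := hp
  obtain ⟨h0i, h2i, hadj⟩ := hok
  rw [List.getD_eq_getElem _ _ (by omega : i < l.length),
    List.getD_eq_getElem _ _ (by omega : l.length - 1 < l.length)] at hadj
  refine ⟨((rot_perm l i).nodup_iff).mpr hnd,
    ⟨rot_chain' hc h2i hadj, fun v => ((rot_perm l i).mem_iff).mpr (hcov v),
      (rot_take_two (by omega) (by omega)).trans ht⟩, h0i, by simpa using h2i, ?_⟩
  have e1 : (rot l i).getD i a = l[i]'(by omega) := by
    rw [List.getD_eq_getElem _ _ (by simp; omega)]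
    exact rot_getElem_le l i (le_refl i) (by omega)
  have e2 : (rot l i).getD ((rot l i).length - 1) a = l[i+1]'(by omega) := by
    rw [rot_length]
    rw [List.getD_eq_getElem _ _ (by simp; omega)]
    exact rot_getElem_last l i h2i
  rw [rot_length, ← rot_length l i, e2, e1]
  have := List.isChain_iff_getElem.mp hc i (by omega)
  simpa [List.get_eq_getElem] using this

lemma first_edge_not_mem [DecidableEq V] {l1 : List V} {a b : V} (hnd : l1.Nodup)
    (hg0 : l1.getD 0 a = a) (hg1 : l1.getD 1 a = b) (hlen3 : 3 ≤ l1.length) :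
    s(a, b) ∉ edgesOf (l1.tail ++ [a]) := by
  intro hmem
  obtain ⟨i, hi, heq⟩ := (mem_edgesOf_getD a).mp hmem
  have hLq : (l1.tail ++ [a]).length = l1.length := by
    simp [List.length_tail]
    omega
  rw [hLq] at hi
  have htail : ∀ k, k < l1.length - 1 → (l1.tail ++ [a]).getD k a = l1.getD (k+1) a := by
    intro k hk
    rw [List.getD_append _ _ _ _ (by simp [List.length_tail]; omega)]
    cases l1 with
    | nil => simp at hlen3
    | cons x t => simp
  have hsing : ∀ m, [a].getD m a = a := fun m => by cases m <;> simp
  have hlastq : (l1.tail ++ [a]).getD (l1.length - 1) a = a := by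
    rw [List.getD_append_right _ _ _ _ (by simp [List.length_tail] <;> omega), hsing]
  rcases Sym2.eq_iff.mp heq with ⟨h1, h2⟩ | ⟨h1, h2⟩
  · -- a = q' i, b = q' (i+1)
    have hilt : i < l1.length - 1 := by omega
    rw [htail i hilt] at h1
    have := getD_inj hnd (by omega : 0 < l1.length) (by omega : i + 1 < l1.length)
      (hg0.trans h1)
    omega
  · -- a = q' (i+1), b = q' i
    rcases Nat.lt_or_ge (i+1) (l1.length - 1) with hc1 | hc1
    · rw [htail (i+1) hc1] at h1
      have := getD_inj hnd (by omega : 0 < l1.length) (by omega : i + 2 < l1.length)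
        (hg0.trans h1)
      omega
    · have hilt : i < l1.length - 1 := by omega
      rw [htail i hilt] at h2
      have := getD_inj hnd (by omega : 1 < l1.length) (by omega : i + 1 < l1.length)
        (hg1.trans h2)
      omega

end Main

theorem stmt15' {V : Type*} [Fintype V] (G : SimpleGraph V)
    (hodd : ∀ v : V, Odd ((G.neighborSet v).ncard))
    (a : V) (w : G.Walk a a) (hw : w.IsCycle) (hham : ∀ v : V, v ∈ w.support) :
    ∃ (b : V) (w' : G.Walk b b), w'.IsCycle ∧ (∀ v : V, v ∈ w'.support) ∧
      {e | e ∈ w'.edges} ≠ {e | e ∈ w.edges} := by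
  classical
  have hdeg : ∀ v : V, Odd (G.degree v) := by
    intro v
    have h := hodd v
    rwa [Set.ncard_eq_toFinset_card', Set.toFinset_card,
      SimpleGraph.card_neighborSet_eq_degree] at h
  -- extract base Hamiltonian path list l0
  have hsupne : w.support ≠ [] := w.support_ne_nil
  have hlast : w.support.getLast hsupne = a := w.getLast_support
  set l0 := w.support.dropLast with hl0
  have hsup : w.support = l0 ++ [a] := by
    conv_lhs => rw [← List.dropLast_append_getLast hsupne]
    rw [hlast]
  have h3 : 3 ≤ w.length := hw.three_le_length
  have hlen_sup : w.support.length = w.length + 1 := w.length_support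
  have hlen0 : l0.length = w.length := by
    rw [hl0, List.length_dropLast, hlen_sup]
    omega
  have hl0ne : l0 ≠ [] := by
    intro h
    rw [h] at hlen0
    simp at hlen0
    omega
  -- head of l0 is a
  have hg00' : l0.getD 0 a = a := by
    have h1 : w.support = a :: w.support.tail := w.support_eq_cons
    have h2 : w.support.getD 0 a = a := by rw [h1]; rfl
    rw [hsup, List.getD_append _ _ _ _ (by omega : 0 < l0.length)] at h2
    exact h2
  obtain ⟨x, t, hxt⟩ := List.exists_cons_of_ne_nil hl0ne
  have hxa : x = a := by rw [hxt] at hg00'; simpa using hg00'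
  rw [hxa] at hxt
  have hhead : l0 = a :: l0.tail := by rw [hxt]; rfl
  -- nodup of l0
  have hndtail : w.support.tail.Nodup := hw.support_nodup
  have htails : w.support.tail = l0.tail ++ [a] := by
    rw [hsup, hxt]
    rfl
  have hnd0 : l0.Nodup := by
    rw [htails, List.nodup_append] at hndtail
    obtain ⟨hn1, _, hdisj⟩ := hndtail
    rw [hhead, List.nodup_cons]
    exact ⟨fun hmem => hdisj a hmem a (by simp) rfl, hn1⟩
  have hcov0 : ∀ v : V, v ∈ l0 := by
    intro v
    have := hham v
    rw [hsup, List.mem_append] at this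
    rcases this with h | h
    · exact h
    · simp at h
      rw [h, hhead]
      exact List.mem_cons_self
  set n := Fintype.card V with hnV
  have hl0len : l0.length = n := length_eq_card hnd0 hcov0
  have hn3 : 3 ≤ n := by omega
  -- chain facts
  have hchainsup : List.Chain' G.Adj w.support := w.isChain_adj_support
  rw [hsup] at hchainsup
  obtain ⟨hchain0, -, hjunc⟩ := List.isChain_append.mp hchainsup
  have hgl : l0.getLast? = some (l0.getD (l0.length - 1) a) := by
    rw [List.getLast?_eq_getElem?, List.getElem?_eq_getElem (by omega : l0.length - 1 < l0.length),
      List.getD_eq_getElem _ _ (by omega)]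
  have hz0adj : G.Adj a (l0.getD (l0.length - 1) a) := by
    refine (hjunc _ ?_ a ?_).symm
    · rw [hgl]; rfl
    · rfl
  -- second vertex b
  have htne : l0.tail ≠ [] := by
    intro h
    have := congrArg List.length hhead
    rw [h] at this
    simp at this
    omega
  obtain ⟨y, r0, hyr⟩ := List.exists_cons_of_ne_nil htne
  set b := y with hbdef
  have ht0 : l0.take 2 = [a, b] := by
    rw [hhead, hyr]
    rfl
  have hg00 : l0.getD 0 a = a := by rw [hhead]; rfl
  have hg01 : l0.getD 1 a = b := by rw [hhead, hyr]; rfl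
  -- the finite sets
  set P : Finset {l : List V // l.Nodup} :=
    Finset.univ.filter (fun p => isHP G a b p.1) with hPdef
  set M : Finset ({l : List V // l.Nodup} × ℕ) :=
    (P ×ˢ Finset.range n).filter (fun m => pivotOK G a m.1.1 m.2) with hMdef
  have hmemM : ∀ m, m ∈ M ↔ isHP G a b m.1.1 ∧ m.2 < n ∧ pivotOK G a m.1.1 m.2 := by
    intro m
    rw [hMdef, Finset.mem_filter, Finset.mem_product, hPdef, Finset.mem_filter,
      Finset.mem_range]
    simp only [Finset.mem_univ, true_and]
    tauto
  have hPlen : ∀ p : {l : List V // l.Nodup}, p ∈ P → p.1.length = n := by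
    intro p hp
    rw [hPdef, Finset.mem_filter] at hp
    exact length_eq_card p.2 hp.2.2.1
  -- involution
  have hMeven : (M.card : ZMod 2) = 0 := by
    have hsum : ∑ _x ∈ M, (1 : ZMod 2) = 0 := by
      refine Finset.sum_involution
        (fun m _ => (⟨rot m.1.1 m.2, ((rot_perm m.1.1 m.2).nodup_iff).mpr m.1.2⟩, m.2))
        (fun m hm => ?_) (fun m hm _ => ?_) (fun m hm => ?_) (fun m hm => ?_)
      · decide
      · -- g m ≠ m
        intro hgm
        have h1 := congrArg (fun x => x.1.1) hgm
        simp only at h1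
        obtain ⟨-, -, hok⟩ := (hmemM m).mp hm
        exact rot_ne m.1.2 hok.2.1 h1
      · -- membership
        obtain ⟨hhp, hrange, hok⟩ := (hmemM m).mp hm
        obtain ⟨hnd', hhp', hok'⟩ := rot_good m.1.2 hhp hok
        exact (hmemM _).mpr ⟨hhp', hrange, hok'⟩
      · -- involutive
        obtain ⟨hhp, hrange, hok⟩ := (hmemM m).mp hm
        have : rot (rot m.1.1 m.2) m.2 = m.1.1 := rot_rot _ _ (by have := hok.2.1; omega)
        exact Prod.ext (Subtype.ext this) rfl
    rw [Finset.sum_const, nsmul_eq_mul, mul_one] at hsum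
    exact hsum
  have hMdvd : 2 ∣ M.card := by
    rwa [ZMod.natCast_eq_zero_iff] at hMeven
  -- fiberwise count
  have hfib : ∀ p ∈ P, (M.filter fun m => m.1 = p).card
      = ((Finset.range p.1.length).filter (fun i => pivotOK G a p.1 i)).card := by
    intro p hp
    apply Finset.card_bij (fun m _ => m.2)
    · intro m hm
      rw [Finset.mem_filter] at hm
      obtain ⟨hmM, hfst⟩ := hm
      obtain ⟨hhp, hrange, hok⟩ := (hmemM m).mp hmM
      rw [Finset.mem_filter, Finset.mem_range, hPlen p hp]
      rw [hfst] at hok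
      exact ⟨hrange, hok⟩
    · intro m hm m' hm' h
      rw [Finset.mem_filter] at hm hm'
      exact Prod.ext (hm.2.trans hm'.2.symm) h
    · intro i hi
      rw [Finset.mem_filter, Finset.mem_range, hPlen p hp] at hi
      refine ⟨(p, i), ?_, rfl⟩
      rw [Finset.mem_filter]
      refine ⟨(hmemM _).mpr ⟨?_, hi.1, hi.2⟩, rfl⟩
      rw [hPdef, Finset.mem_filter] at hp
      exact hp.2
  have hMsum : M.card = ∑ p ∈ P, ((Finset.range p.1.length).filter
      (fun i => pivotOK G a p.1 i)).card := by
    rw [Finset.card_eq_sum_card_fiberwise (f := Prod.fst) (t := P)]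
    · exact Finset.sum_congr rfl hfib
    · intro m hm
      rw [hMdef, Finset.mem_coe, Finset.mem_filter, Finset.mem_product] at hm
      exact hm.1.1
  -- the closable set
  set S : Finset {l : List V // l.Nodup} :=
    P.filter (fun p => G.Adj a (p.1.getD (p.1.length - 1) a)) with hSdef
  have hparity : ∀ p ∈ P,
      ((Finset.range p.1.length).filter (fun i => pivotOK G a p.1 i)).card % 2
      = (if G.Adj a (p.1.getD (p.1.length - 1) a) then 1 else 0) % 2 := by
    intro p hp
    rw [hPdef, Finset.mem_filter] at hp
    obtain ⟨-, hchain, hcov, htake⟩ := hp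
    have hlen3 : 3 ≤ p.1.length := by rw [length_eq_card p.2 hcov]; omega
    have hcnt := pivot_count (G := G) p.2 hcov hchain htake rfl hlen3
    obtain ⟨k, hk⟩ := hdeg (p.1.getD (p.1.length - 1) a)
    rw [hk] at hcnt
    by_cases hA : G.Adj a (p.1.getD (p.1.length - 1) a) <;>
      simp only [hA, if_true, if_false] at hcnt ⊢ <;> omega
  have hScard : 2 ∣ S.card := by
    have h1 : S.card = ∑ p ∈ P, (if G.Adj a (p.1.getD (p.1.length - 1) a) then 1 else 0) := by
      rw [hSdef, Finset.card_filter]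
    have h2 : M.card % 2 = S.card % 2 := by
      rw [hMsum, h1, Finset.sum_nat_mod, Finset.sum_congr rfl hparity, ← Finset.sum_nat_mod]
    omega
  -- l0 is in S
  have hl0P : (⟨l0, hnd0⟩ : {l : List V // l.Nodup}) ∈ P := by
    rw [hPdef, Finset.mem_filter]
    exact ⟨Finset.mem_univ _, hchain0, hcov0, ht0⟩
  have hl0S : (⟨l0, hnd0⟩ : {l : List V // l.Nodup}) ∈ S := by
    rw [hSdef, Finset.mem_filter]
    exact ⟨hl0P, hz0adj⟩
  -- extract a second element of S
  obtain ⟨p1, hp1S, hp1ne⟩ : ∃ p1 ∈ S, p1 ≠ (⟨l0, hnd0⟩ : {l : List V // l.Nodup}) := by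
    by_contra hcon
    push_neg at hcon
    have : S = {(⟨l0, hnd0⟩ : {l : List V // l.Nodup})} := by
      apply Finset.eq_singleton_iff_unique_mem.mpr
      exact ⟨hl0S, hcon⟩
    rw [this, Finset.card_singleton] at hScard
    omega
  -- unpack p1
  rw [hSdef, Finset.mem_filter] at hp1S
  obtain ⟨hp1P, hz1adj⟩ := hp1S
  have hp1Pmem := hp1P
  rw [hPdef, Finset.mem_filter] at hp1Pmem
  obtain ⟨-, hchain1, hcov1, htake1⟩ := hp1Pmem
  set l1 := p1.1 with hl1def
  have hnd1 : l1.Nodup := p1.2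
  have hlen1 : l1.length = n := length_eq_card hnd1 hcov1
  obtain ⟨r1, hr1⟩ : ∃ r, l1 = a :: b :: r := by
    refine ⟨l1.drop 2, ?_⟩
    conv_lhs => rw [← List.take_append_drop 2 l1, htake1]
    rfl
  have hg10 : l1.getD 0 a = a := by rw [hr1]; rfl
  have hg11 : l1.getD 1 a = b := by rw [hr1]; rfl
  -- build the cycle walk
  have hCC : List.Chain' G.Adj (l1 ++ [a]) := by
    refine List.isChain_append.mpr ?_
    refine ⟨hchain1, List.isChain_singleton a, ?_⟩
    intro x hx y hy
    have hgl1 : l1.getLast? = some (l1.getD (l1.length - 1) a) := by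
      rw [List.getLast?_eq_getElem?,
        List.getElem?_eq_getElem (by omega : l1.length - 1 < l1.length),
        List.getD_eq_getElem _ _ (by omega)]
    rw [hgl1] at hx
    obtain rfl : l1.getD (l1.length - 1) a = x := by simpa using hx
    obtain rfl : a = y := by simpa using hy
    exact hz1adj.symm
  have hCC2 : List.Chain G.Adj a ((b :: r1) ++ [a]) := by
    have h' : List.Chain' G.Adj (l1 ++ [a]) := hCC
    rw [hr1] at h'
    exact h'
  have hab : G.Adj a b := (List.chain_cons.mp hCC2).1
  have hchb : List.Chain G.Adj b (r1 ++ [a]) := (List.chain_cons.mp hCC2).2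
  set p' : G.Walk b a := mkWalk G b a r1 hchb with hp'def
  have hp'supp : p'.support = (b :: r1) ++ [a] := by
    rw [hp'def, mkWalk_support]
    rfl
  set w' : G.Walk a a := SimpleGraph.Walk.cons hab p' with hw'def
  have hw'supp : w'.support = l1 ++ [a] := by
    rw [hw'def, SimpleGraph.Walk.support_cons, hp'supp, hr1]
    rfl
  have hw'cov : ∀ v : V, v ∈ w'.support := by
    intro v
    rw [hw'supp, List.mem_append]
    exact Or.inl (hcov1 v)
  have hw'cyc : w'.IsCycle := by
    rw [hw'def]
    rw [SimpleGraph.Walk.cons_isCycle_iff]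
    have htl1 : l1.tail = b :: r1 := by rw [hr1]; rfl
    constructor
    · rw [SimpleGraph.Walk.isPath_def, hp'supp]
      rw [← htl1, List.nodup_append]
      have hnd1' := hnd1
      rw [hr1, List.nodup_cons] at hnd1'
      obtain ⟨hamem, hnd1''⟩ := hnd1'
      refine ⟨by rw [htl1]; exact hnd1'', List.nodup_singleton a, ?_⟩
      intro x hx y hx' hxy
      rw [List.mem_singleton] at hx'
      subst hx'
      subst hxy
      rw [htl1] at hx
      exact hamem hx
    · rw [walk_edges_eq, hp'supp, ← htl1]
      exact first_edge_not_mem hnd1 hg10 hg11 (by omega)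
  refine ⟨a, w', hw'cyc, hw'cov, ?_⟩
  -- edge sets differ
  intro hEeq
  have hwe : w.edges = edgesOf (l0 ++ [a]) := by rw [walk_edges_eq, hsup]
  have hwe' : w'.edges = edgesOf (l1 ++ [a]) := by rw [walk_edges_eq, hw'supp]
  have hE : ∀ e, e ∈ edgesOf (l1 ++ [a]) → e ∈ edgesOf (l0 ++ [a]) := by
    intro e he
    have : e ∈ {e | e ∈ w'.edges} := by rw [hwe']; exact he
    rw [hEeq] at this
    rwa [hwe] at this
  have := edges_determine hnd1 hnd0 (by omega) (by omega) htake1 ht0 hE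
  exact hp1ne (Subtype.ext this)

end Thomason

/-- Thomason's theorem: every Hamiltonian graph in which every vertex has odd
degree contains a second Hamiltonian cycle, i.e. for any Hamiltonian cycle of
such a graph there is a Hamiltonian cycle with a different edge set. -/
theorem stmt15 {V : Type*} [Fintype V] (G : SimpleGraph V)
    (hodd : ∀ v : V, Odd ((G.neighborSet v).ncard))
    (a : V) (w : G.Walk a a) (hw : w.IsCycle) (hham : ∀ v : V, v ∈ w.support) :
    ∃ (b : V) (w' : G.Walk b b), w'.IsCycle ∧ (∀ v : V, v ∈ w'.support) ∧
      {e | e ∈ w'.edges} ≠ {e | e ∈ w.edges} := by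
  exact Thomason.stmt15' G hodd a w hw hham
end

section
/- Suppose the dual power assignment algorithm with parameter k = 8 satisfies: (a) |R| ≤ (k/(k−1))(n − n_{k−1}) + Σ_{i=4}^{k−1} i·b_i + Σ_{i=5}^{k−1} Σ_{j=4}^{i−1} j·b_{i,j} + OPT(G_{R_3}); (b) n_{k−1} = n_3 + Σ_{i=4}^{k−1}(i−1)b_i + Σ_{i=5}^{k−1}Σ_{j=4}^{i−1}(j−1)b_{i,j}; (c) OPT(G_{R_3}) ≤ 2(n_3 − 1); (d) OPT(G_{R_3}) ≤ OPT(G_{R_{k−1}}) − 2Σ_{i=4}^{⌈k/2⌉}b_i − 2Σ_{i=5}^{⌈k/2⌉}Σ_{j=4}^{i−1}b_{i,j} − Σ_{i=⌈k/2⌉+1}^{k−1}b_i − 2Σ_{i=⌈k/2⌉+1}^{k−1}Σ_{j=4}^{⌈k/2⌉}b_{i,j} − Σ_{i=⌈k/2⌉+1}^{k−1}Σ_{j=⌈k/2⌉+1}^{i−1}b_{i,j}; and (e) OPT ≥ n and OPT ≥ OPT(G_{R_{k−1}}). Then |R| ≤ ((3k−2)/(2(k−1)))·OPT = (11/7)·OPT.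 -/
open Finset

/-- The algebraic deduction (for `k = 8`, so `⌈k/2⌉ = 4` and `k − 1 = 7`)
combining the inequalities (a)–(e) of the analysis of the dual power
assignment algorithm: the output set `R` satisfies
`|R| ≤ ((3k−2)/(2(k−1)))·OPT = (11/7)·OPT`. -/
theorem stmt17 (r n n3 n7 opt3 opt7 opt : ℕ) (b : ℕ → ℕ) (bij : ℕ → ℕ → ℕ)
    -- (a)
    (ha : (r : ℝ) ≤ ((8 : ℝ) / (8 - 1)) * ((n : ℝ) - (n7 : ℝ)) +
      (∑ i ∈ Icc (4:ℕ) 7, (i : ℝ) * (b i : ℝ)) +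
      (∑ i ∈ Icc (5:ℕ) 7, ∑ j ∈ Icc (4:ℕ) (i - 1), (j : ℝ) * (bij i j : ℝ)) +
      (opt3 : ℝ))
    -- (b)
    (hb : (n7 : ℝ) = (n3 : ℝ) + (∑ i ∈ Icc (4:ℕ) 7, ((i : ℝ) - 1) * (b i : ℝ)) +
      (∑ i ∈ Icc (5:ℕ) 7, ∑ j ∈ Icc (4:ℕ) (i - 1), ((j : ℝ) - 1) * (bij i j : ℝ)))
    -- (c)
    (hc : (opt3 : ℝ) ≤ 2 * ((n3 : ℝ) - 1))
    -- (d)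
    (hd : (opt3 : ℝ) ≤ (opt7 : ℝ) - 2 * (∑ i ∈ Icc (4:ℕ) 4, (b i : ℝ)) -
      2 * (∑ i ∈ Icc (5:ℕ) 4, ∑ j ∈ Icc (4:ℕ) (i - 1), (bij i j : ℝ)) -
      (∑ i ∈ Icc (5:ℕ) 7, (b i : ℝ)) -
      2 * (∑ i ∈ Icc (5:ℕ) 7, ∑ j ∈ Icc (4:ℕ) 4, (bij i j : ℝ)) -
      (∑ i ∈ Icc (5:ℕ) 7, ∑ j ∈ Icc (5:ℕ) (i - 1), (bij i j : ℝ)))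
    -- (e)
    (he1 : (n : ℝ) ≤ (opt : ℝ)) (he2 : (opt7 : ℝ) ≤ (opt : ℝ)) :
    (r : ℝ) ≤ ((3 * (8 : ℝ) - 2) / (2 * ((8 : ℝ) - 1))) * (opt : ℝ) ∧
      ((3 * (8 : ℝ) - 2) / (2 * ((8 : ℝ) - 1))) = (11 : ℝ) / 7 := by
  have key : ∀ (f : ℕ → ℝ), (∑ i ∈ Icc (4:ℕ) 7, f i) = f 4 + f 5 + f 6 + f 7 := by
    intro f
    have : (Icc 4 7 : Finset ℕ) = {4,5,6,7} := by decide
    rw [this]; simp [Finset.sum_insert, Finset.mem_insert]; ring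
  have key5 : ∀ (f : ℕ → ℝ), (∑ i ∈ Icc (5:ℕ) 7, f i) = f 5 + f 6 + f 7 := by
    intro f
    have : (Icc 5 7 : Finset ℕ) = {5,6,7} := by decide
    rw [this]; simp [Finset.sum_insert, Finset.mem_insert]; ring
  have key4 : ∀ (f : ℕ → ℝ), (∑ i ∈ Icc (4:ℕ) 4, f i) = f 4 := by
    intro f; simp
  have key54 : ∀ (f : ℕ → ℝ), (∑ i ∈ Icc (5:ℕ) 4, f i) = 0 := by
    intro f; simp
  have key45 : ∀ (f : ℕ → ℝ), (∑ i ∈ Icc (4:ℕ) 5, f i) = f 4 + f 5 := by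
    intro f
    have : (Icc 4 5 : Finset ℕ) = {4,5} := by decide
    rw [this]; simp
  have key46 : ∀ (f : ℕ → ℝ), (∑ i ∈ Icc (4:ℕ) 6, f i) = f 4 + f 5 + f 6 := by
    intro f
    have : (Icc 4 6 : Finset ℕ) = {4,5,6} := by decide
    rw [this]; simp [Finset.sum_insert, Finset.mem_insert]; ring
  have key56 : ∀ (f : ℕ → ℝ), (∑ i ∈ Icc (5:ℕ) 6, f i) = f 5 + f 6 := by
    intro f
    have : (Icc 5 6 : Finset ℕ) = {5,6} := by decide
    rw [this]; simp
  have key55 : ∀ (f : ℕ → ℝ), (∑ i ∈ Icc (5:ℕ) 5, f i) = f 5 := by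
    intro f; simp
  simp only [key, key5, key4, key54, key45, key46, key56, key55] at ha hb hd
  norm_num at ha hb hd
  constructor
  · rw [show ((3 * (8 : ℝ) - 2) / (2 * ((8 : ℝ) - 1))) = 11/7 by norm_num]
    nlinarith [hc, he1, he2, ha, hb, hd]
  · norm_num
end

section
/- Let k ≥ 4 and suppose an algorithm for SCSS on a symmetric unweighted digraph whose longest cycle has length at most k outputs R with |R| ≤ Σ_{i=4}^{k} i·b_i + OPT(G_{R_3}), where OPT(G_{R_3}) ≤ OPT(G_R) − 2Σ_{i=4}^{k} b_i, OPT(G_{R_3}) ≤ 2(n_3 − 1), n = n_3 + Σ_{i=4}^{k}(i−1)b_i, and n ≤ ((k−1)/k)·OPT(G_R). Then |R| ≤ ((3k−2)/(2k))·OPT(G_R). -/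
open Finset

/-- The algebraic chain for the SCSS algorithm on symmetric unweighted
digraphs whose longest cycle has length at most `k` (`k ≥ 4`): if
`|R| ≤ Σ_{i=4}^{k} i·b_i + OPT(G_{R_3})`,
`OPT(G_{R_3}) ≤ OPT(G_R) − 2Σ_{i=4}^{k} b_i`, `OPT(G_{R_3}) ≤ 2(n_3 − 1)`,
`n = n_3 + Σ_{i=4}^{k}(i−1)·b_i`, and `n ≤ ((k−1)/k)·OPT(G_R)`, then
`|R| ≤ ((3k−2)/(2k))·OPT(G_R)`. -/
theorem stmt18 (k : ℕ) (hk : 4 ≤ k) (r n n3 opt3 opt : ℕ) (b : ℕ → ℕ)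
    (h1 : (r : ℝ) ≤ (∑ i ∈ Icc (4:ℕ) k, (i : ℝ) * (b i : ℝ)) + (opt3 : ℝ))
    (h2 : (opt3 : ℝ) ≤ (opt : ℝ) - 2 * (∑ i ∈ Icc (4:ℕ) k, (b i : ℝ)))
    (h3 : (opt3 : ℝ) ≤ 2 * ((n3 : ℝ) - 1))
    (h4 : (n : ℝ) = (n3 : ℝ) + (∑ i ∈ Icc (4:ℕ) k, ((i : ℝ) - 1) * (b i : ℝ)))
    (h5 : (n : ℝ) ≤ (((k : ℝ) - 1) / (k : ℝ)) * (opt : ℝ)) :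
    (r : ℝ) ≤ ((3 * (k : ℝ) - 2) / (2 * (k : ℝ))) * (opt : ℝ) := by
  have hk0 : (0:ℝ) < (k:ℝ) := by
    have : (0:ℕ) < k := by omega
    exact_mod_cast this
  have hsum : (∑ i ∈ Icc (4:ℕ) k, ((i : ℝ) - 1) * (b i : ℝ))
      = (∑ i ∈ Icc (4:ℕ) k, (i : ℝ) * (b i : ℝ))
        - (∑ i ∈ Icc (4:ℕ) k, (b i : ℝ)) := by
    rw [← Finset.sum_sub_distrib]
    exact Finset.sum_congr rfl fun i _ => by ring
  have hmul : (n : ℝ) * (k : ℝ) ≤ ((k : ℝ) - 1) * (opt : ℝ) := by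
    have := mul_le_mul_of_nonneg_right h5 hk0.le
    calc (n:ℝ) * (k:ℝ) ≤ (((k : ℝ) - 1) / (k : ℝ)) * (opt : ℝ) * (k:ℝ) := this
      _ = ((k : ℝ) - 1) * (opt : ℝ) := by field_simp
  rw [div_mul_eq_mul_div, le_div_iff₀ (by positivity)]
  nlinarith [hmul, h1, h2, h3, h4, hsum]
end
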